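/- arXiv:1710.09244 — 12 statements merged into one kernel-verified Lean document; each statement's English description precedes it below -/
import Mathlib

section
/- Let X, Y be real normed spaces, T : X → Y a bounded linear operator, q > 1 with conjugate exponent q*, S(y) := (1/q)‖y‖^q, S*(p) := (1/q*)‖p‖^{q*}, α > 0, g ∈ Y, and R : X → ℝ convex. Let n ≥ 1 and let f₁, …, f_n ∈ X and p₁, …, p_n ∈ Y* satisfy: (i) f₁ minimizes h ↦ (1/α)S(Th − g) + R(h) over X; (ii) for each 2 ≤ k ≤ n, the functional ξ_{k−1} := (Σ_{j=1}^{k−1} p_j) ∘ T ∈ X* is a subgradient of R at f_{k−1}, and f_k minimizes h ↦ (1/α)S(Th − g) + D_R^{ξ_{k−1}}(h, f_{k−1}) over X; (iii) for each 1 ≤ k ≤ n, −α p_k ∈ ∂S(T f_k − g). Suppose further f† ∈ X and p̄ ∈ Y* satisfy p̄ ∘ T ∈ ∂R(f†), and set s := p̄ − Σ_{k=1}^{n−1} p_k ∈ Y*. Then for every f ∈ X: D_R^{p̄∘T}(f_n, f†) ≤ (1/α)S(T f − g) + s(T f − g) + (1/α)S*(−α s) + D_R^{p̄∘T}(f, f†).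 -/
/-!
Since `ξ_{n-1} = (Σ_{k<n} p_k) ∘ T` is linear, minimality of `f_n` for the Bregman-iterated
Tikhonov functional says that `f_n` minimizes `h ↦ (1/α) S(Th - g) + R h - ξ_{n-1} h`.
Comparing with `f'` and splitting `p̄ = s + Σ_{k<n} p_k` bounds `D(f_n, f†) - D(f', f†)` by
`(1/α) S(Tf' - g) + s(Tf' - g) - (1/α) S(Tf_n - g) - s(Tf_n - g)`, and the Fenchel–Young
inequality `-α s(y) ≤ S(y) + S*(-α s)` absorbs the last two terms.
-/

open ContinuousLinearMap

section Young

variable {Y : Type*} [NormedAddCommGroup Y] [NormedSpace ℝ Y] {q qs : ℝ}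

theorem ContinuousLinearMap.apply_le_young (hpq : q.HolderConjugate qs) (ℓ : Y →L[ℝ] ℝ)
    (y : Y) : ℓ y ≤ 1 / q * ‖y‖ ^ q + 1 / qs * ‖ℓ‖ ^ qs :=
  calc ℓ y ≤ ‖ℓ‖ * ‖y‖ := (Real.le_norm_self _).trans (ℓ.le_opNorm y)
    _ = ‖y‖ * ‖ℓ‖ := mul_comm _ _
    _ ≤ ‖y‖ ^ q / q + ‖ℓ‖ ^ qs / qs :=
      Real.young_inequality_of_nonneg (norm_nonneg _) (norm_nonneg _) hpq
    _ = _ := by ring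

theorem ContinuousLinearMap.neg_apply_le_young (hpq : q.HolderConjugate qs) {α : ℝ}
    (hα : 0 < α) (s : Y →L[ℝ] ℝ) (y : Y) :
    -s y ≤ 1 / α * (1 / q * ‖y‖ ^ q) + 1 / α * (1 / qs * ‖(-α) • s‖ ^ qs) := by
  have hyoung := ((-α) • s).apply_le_young hpq y
  rw [smul_apply, smul_eq_mul] at hyoung
  calc -s y = 1 / α * (-α * s y) := by field_simp
    _ ≤ 1 / α * (1 / q * ‖y‖ ^ q + 1 / qs * ‖(-α) • s‖ ^ qs) := by gcongr
    _ = _ := mul_add _ _ _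

end Young

theorem bregman_le_of_forall_le {X Y : Type*} [NormedAddCommGroup X] [NormedSpace ℝ X]
    [NormedAddCommGroup Y] [NormedSpace ℝ Y] (T : X →L[ℝ] Y) {q qs : ℝ}
    (hpq : q.HolderConjugate qs) {α : ℝ} (hα : 0 < α) (g : Y) (R : X → ℝ)
    (ξ pbar : Y →L[ℝ] ℝ) (u fdag : X)
    (hu : ∀ h : X, 1 / α * (1 / q * ‖T u - g‖ ^ q) + R u - ξ (T u)
      ≤ 1 / α * (1 / q * ‖T h - g‖ ^ q) + R h - ξ (T h)) (f' : X) :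
    R u - R fdag - (pbar.comp T) (u - fdag)
      ≤ 1 / α * (1 / q * ‖T f' - g‖ ^ q) + (pbar - ξ) (T f' - g)
        + 1 / α * (1 / qs * ‖(-α) • (pbar - ξ)‖ ^ qs)
        + (R f' - R fdag - (pbar.comp T) (f' - fdag)) := by
  have hyoung := (pbar - ξ).neg_apply_le_young hpq hα (T u - g)
  have hmin := hu f'
  simp only [map_sub, comp_apply, sub_apply] at hyoung ⊢
  linarith

theorem stmt_1_general {X Y : Type*} [NormedAddCommGroup X] [NormedSpace ℝ X]
    [NormedAddCommGroup Y] [NormedSpace ℝ Y]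
    (T : X →L[ℝ] Y) (q qs : ℝ) (hq : 1 < q) (hqs : 1 / q + 1 / qs = 1)
    (α : ℝ) (hα : 0 < α) (g : Y)
    (R : X → ℝ)
    (n : ℕ) (hn : 1 ≤ n) (f : ℕ → X) (p : ℕ → Y →L[ℝ] ℝ)
    -- (i) f 1 minimizes the Tikhonov functional
    (hf1 : ∀ h : X, 1 / α * (1 / q * ‖T (f 1) - g‖ ^ q) + R (f 1)
      ≤ 1 / α * (1 / q * ‖T h - g‖ ^ q) + R h)
    -- (ii) for 2 ≤ k ≤ n : ξ_{k-1} = (Σ_{j=1}^{k-1} p_j)∘T ∈ ∂R(f_{k-1}) and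
    --       f k minimizes the Bregman-iterated Tikhonov functional
    (hfk : ∀ k : ℕ, 2 ≤ k → k ≤ n →
      (∀ h : X, R (f (k - 1))
          + ((∑ j ∈ Finset.Icc 1 (k - 1), p j).comp T) (h - f (k - 1)) ≤ R h) ∧
      (∀ h : X,
        1 / α * (1 / q * ‖T (f k) - g‖ ^ q)
          + (R (f k) - R (f (k - 1))
            - ((∑ j ∈ Finset.Icc 1 (k - 1), p j).comp T) (f k - f (k - 1)))
        ≤ 1 / α * (1 / q * ‖T h - g‖ ^ q)
          + (R h - R (f (k - 1))
            - ((∑ j ∈ Finset.Icc 1 (k - 1), p j).comp T) (h - f (k - 1)))))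
    (fdag : X) (pbar : Y →L[ℝ] ℝ) :
    ∀ f' : X,
      R (f n) - R fdag - (pbar.comp T) (f n - fdag)
        ≤ 1 / α * (1 / q * ‖T f' - g‖ ^ q)
          + (pbar - ∑ k ∈ Finset.Icc 1 (n - 1), p k) (T f' - g)
          + 1 / α * (1 / qs * ‖(-α) • (pbar - ∑ k ∈ Finset.Icc 1 (n - 1), p k)‖ ^ qs)
          + (R f' - R fdag - (pbar.comp T) (f' - fdag)) := by
  have hpq : q.HolderConjugate qs :=
    Real.holderConjugate_iff.mpr ⟨hq, by simpa only [one_div] using hqs⟩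
  refine bregman_le_of_forall_le T hpq hα g R _ pbar (f n) fdag fun h ↦ ?_
  obtain rfl | hn := hn.eq_or_lt
  · simpa using hf1 h
  · have hmin := (hfk n hn le_rfl).2 h
    simp only [map_sub, comp_apply] at hmin
    linarith

/-- Basic error bound for Bregman iterated Tikhonov regularization
(Lemma 2.3 / `Lemma11.19` of the paper): for the `n`-th Bregman iterate `f n`
one has, for all `f' ∈ X`,
`D_R^{p̄∘T}(f n, f†) ≤ (1/α)S(Tf'−g) + s(Tf'−g) + (1/α)S*(−αs) + D_R^{p̄∘T}(f', f†)`
where `s = p̄ − Σ_{k=1}^{n−1} p_k`. -/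
theorem stmt_1 {X Y : Type*} [NormedAddCommGroup X] [NormedSpace ℝ X]
    [NormedAddCommGroup Y] [NormedSpace ℝ Y]
    (T : X →L[ℝ] Y) (q qs : ℝ) (hq : 1 < q) (hqs : 1 / q + 1 / qs = 1)
    (α : ℝ) (hα : 0 < α) (g : Y)
    (R : X → ℝ) (hR : ConvexOn ℝ Set.univ R)
    (n : ℕ) (hn : 1 ≤ n) (f : ℕ → X) (p : ℕ → Y →L[ℝ] ℝ)
    -- (i) f 1 minimizes the Tikhonov functional
    (hf1 : ∀ h : X, 1 / α * (1 / q * ‖T (f 1) - g‖ ^ q) + R (f 1)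
      ≤ 1 / α * (1 / q * ‖T h - g‖ ^ q) + R h)
    -- (ii) for 2 ≤ k ≤ n : ξ_{k-1} = (Σ_{j=1}^{k-1} p_j)∘T ∈ ∂R(f_{k-1}) and
    --       f k minimizes the Bregman-iterated Tikhonov functional
    (hfk : ∀ k : ℕ, 2 ≤ k → k ≤ n →
      (∀ h : X, R (f (k - 1))
          + ((∑ j ∈ Finset.Icc 1 (k - 1), p j).comp T) (h - f (k - 1)) ≤ R h) ∧
      (∀ h : X,
        1 / α * (1 / q * ‖T (f k) - g‖ ^ q)
          + (R (f k) - R (f (k - 1))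
            - ((∑ j ∈ Finset.Icc 1 (k - 1), p j).comp T) (f k - f (k - 1)))
        ≤ 1 / α * (1 / q * ‖T h - g‖ ^ q)
          + (R h - R (f (k - 1))
            - ((∑ j ∈ Finset.Icc 1 (k - 1), p j).comp T) (h - f (k - 1)))))
    -- (iii) −α p_k ∈ ∂S(T f_k − g) for 1 ≤ k ≤ n
    (hpk : ∀ k : ℕ, 1 ≤ k → k ≤ n →
      ∀ y : Y, 1 / q * ‖T (f k) - g‖ ^ q + ((-α) • p k) (y - (T (f k) - g))
        ≤ 1 / q * ‖y‖ ^ q)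
    -- source element : p̄ ∘ T ∈ ∂R(f†)
    (fdag : X) (pbar : Y →L[ℝ] ℝ)
    (hpbar : ∀ h : X, R fdag + (pbar.comp T) (h - fdag) ≤ R h) :
    ∀ f' : X,
      R (f n) - R fdag - (pbar.comp T) (f n - fdag)
        ≤ 1 / α * (1 / q * ‖T f' - g‖ ^ q)
          + (pbar - ∑ k ∈ Finset.Icc 1 (n - 1), p k) (T f' - g)
          + 1 / α * (1 / qs * ‖(-α) • (pbar - ∑ k ∈ Finset.Icc 1 (n - 1), p k)‖ ^ qs)
          + (R f' - R fdag - (pbar.comp T) (f' - fdag)) :=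
  stmt_1_general T q qs hq hqs α hα g R n hn f p hf1 hfk fdag pbar
end

section
/- Let X, Y be real Hilbert spaces, T : X → Y a bounded linear operator, f† ∈ X, n ≥ 1 and m ≥ n integers, and Φ a concave index function such that VSC^{2n−1}(f†, Φ) holds. Then there exists a constant C > 0, depending only on n and m, such that for all α > 0 and δ > 0, every g ∈ Y with ‖g − T f†‖ ≤ δ, every Bregman-iterated Tikhonov sequence (f_k) for the data (g, α), and every ψ ∈ ℝ satisfying −t/α + Φ(t) ≤ ψ for all t ≥ 0, one has ‖f_m − f†‖² ≤ C (δ²/α + α^{2n−2} ψ). -/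
/-!
A Tikhonov step solves the normal equation `(T†T + α) f_k = T† g + α f_{k-1}`, so with
`R = (T†T + α)⁻¹` the error satisfies `f_k - f† = R T† (g - T f†) + α R (f_{k-1} - f†)`.
As `α R` is a contraction, `f_m - f† = -(α R)^m f†` up to a noise term of norm at most
`m ‖R T† (g - T f†)‖ ≤ m δ / (2 √α)`.
For the approximation error `v = (α R)^m (T†T)^{n-1} ω`, self-adjointness gives `‖v‖² = ⟪ω, w⟫`
with `w = (T†T)^{n-1} (α R)^m v`; since `m ≥ n`, the factor `α R` absorbs every `T†T` with one to
spare, so `‖w‖² ≤ α^{2n-2} ‖v‖²` and `‖T w‖² ≤ α^{2n-1} ‖v‖²`. Testing the source condition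
with a suitable multiple of `w` then yields `‖v‖² ≤ 6 α^{2n-2} ψ`.
-/

open scoped RealInnerProductSpace
open ContinuousLinearMap

section Contraction

variable {𝕜 E : Type*} [NormedField 𝕜] [SeminormedAddCommGroup E] [NormedSpace 𝕜 E]
  {K : E →L[𝕜] E}

theorem norm_pow_apply_le_of_forall_norm_apply_le (hK : ∀ x, ‖K x‖ ≤ ‖x‖) (k : ℕ) (x : E) :
    ‖(K ^ k) x‖ ≤ ‖x‖ := by
  induction k with
  | zero => simp
  | succ k ih => rw [pow_succ', mul_apply_eq_comp]; exact (hK _).trans ih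

theorem norm_sub_pow_apply_le_of_forall_succ_eq (hK : ∀ x, ‖K x‖ ≤ ‖x‖) {e : ℕ → E} {c : E}
    (he : ∀ k, e (k + 1) = c + K (e k)) (k : ℕ) : ‖e k - (K ^ k) (e 0)‖ ≤ k * ‖c‖ := by
  induction k with
  | zero => simp
  | succ k ih =>
    have : e (k + 1) - (K ^ (k + 1)) (e 0) = c + K (e k - (K ^ k) (e 0)) := by
      rw [he, pow_succ', mul_apply_eq_comp, map_sub]; abel
    rw [this, Nat.cast_succ, add_one_mul, add_comm]
    exact (norm_add_le _ _).trans (add_le_add_left ((hK _).trans ih) _)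

end Contraction

theorem Commute.pow_mul_smul_pow_eq {R A : Type*} [CommSemiring R] [Semiring A] [Algebra R A]
    {a r : A} (h : Commute a r) (c : R) (q p : ℕ) :
    a ^ q * (c • r) ^ (q + p + 1) = c ^ q • ((c • r) * ((a * r) ^ q * (c • r) ^ p)) := by
  calc a ^ q * (c • r) ^ (q + p + 1) = (c • r) * (a ^ q * (c • r) ^ (q + p)) := by
        rw [pow_succ', ← mul_assoc, ((h.smul_right c).pow_left q).eq, mul_assoc]
    _ = (c • r) * ((c • (a * r)) ^ q * (c • r) ^ p) := by
        rw [pow_add, ← mul_assoc (a ^ q), ← (h.smul_right c).mul_pow, mul_smul_comm]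
    _ = c ^ q • ((c • r) * ((a * r) ^ q * (c • r) ^ p)) := by
        rw [smul_pow, smul_mul_assoc (c ^ q), mul_smul_comm]

theorem inner_le_six_mul_of_forall_inner_le {X Y : Type*} [NormedAddCommGroup X]
    [InnerProductSpace ℝ X] [NormedAddCommGroup Y] [InnerProductSpace ℝ Y] {T : X →L[ℝ] Y}
    {ω w : X} {Φ : ℝ → ℝ} {α β ψ : ℝ} (hα : 0 < α) (hβ : 0 < β)
    (hω : ∀ f : X, ⟪ω, f⟫ ≤ 1 / 2 * ‖f‖ ^ 2 + Φ (‖T f‖ ^ 2))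
    (hψ : ∀ t : ℝ, 0 ≤ t → -t / α + Φ t ≤ ψ)
    (hw : ‖w‖ ^ 2 ≤ β * ⟪ω, w⟫) (hTw : ‖T w‖ ^ 2 ≤ α * β * ⟪ω, w⟫) :
    ⟪ω, w⟫ ≤ 6 * β * ψ := by
  -- `t = 1 / (3β)` maximizes `t - (3/2) β t²`, the lower bound the source condition gives
  set t := (3 * β)⁻¹
  have ht : 0 < t := by positivity
  have htβ : t * β = 1 / 3 := by simp only [t]; field_simp
  have hvsc := hω (t • w)
  have hΦ := hψ _ (sq_nonneg ‖T (t • w)‖)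
  simp only [map_smul, norm_smul, mul_pow, Real.norm_of_nonneg ht.le, real_inner_smul_right]
    at hΦ hvsc
  have hTw' : t ^ 2 * ‖T w‖ ^ 2 / α ≤ t * (t * β) * ⟪ω, w⟫ := by
    rw [div_le_iff₀ hα]; nlinarith [mul_le_mul_of_nonneg_left hTw (sq_nonneg t)]
  have hw' : t ^ 2 * ‖w‖ ^ 2 ≤ t * (t * β) * ⟪ω, w⟫ := by
    nlinarith [mul_le_mul_of_nonneg_left hw (sq_nonneg t)]
  have hhalf : t * ⟪ω, w⟫ ≤ 2 * ψ := by
    rw [neg_div] at hΦ; rw [htβ] at hTw' hw'; linarith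
  calc ⟪ω, w⟫ = 3 * β * (t * ⟪ω, w⟫) := by linear_combination (-3 * ⟪ω, w⟫) * htβ
    _ ≤ 6 * β * ψ := by nlinarith

section Tikhonov

variable {X Y : Type*} [NormedAddCommGroup X] [InnerProductSpace ℝ X] [CompleteSpace X]
  [NormedAddCommGroup Y] [InnerProductSpace ℝ Y] [CompleteSpace Y] (T : X →L[ℝ] Y) {α : ℝ}

noncomputable def tikhonovOp (α : ℝ) : X →L[ℝ] X := adjoint T ∘L T + α • 1

-- `Ring.inverse` is `0` on non-invertible operators; `tikhonovOp T α` is invertible for `α > 0`.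
noncomputable def tikhonovResolvent (α : ℝ) : X →L[ℝ] X := Ring.inverse (tikhonovOp T α)

theorem tikhonovOp_apply (x : X) : tikhonovOp T α x = adjoint T (T x) + α • x := rfl

theorem inner_tikhonovOp_apply_self (u : X) :
    ⟪tikhonovOp T α u, u⟫ = ‖T u‖ ^ 2 + α * ‖u‖ ^ 2 := by
  rw [tikhonovOp_apply, inner_add_left, adjoint_inner_left, real_inner_smul_left,
    real_inner_self_eq_norm_sq, real_inner_self_eq_norm_sq]

theorem tikhonovOp_apply_eq_of_isMin {g : Y} {p x : X}
    (hmin : ∀ h, ‖T x - g‖ ^ 2 + α * ‖x - p‖ ^ 2 ≤ ‖T h - g‖ ^ 2 + α * ‖h - p‖ ^ 2) :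
    tikhonovOp T α x = adjoint T g + α • p := by
  have hderiv : HasFDerivAt (fun h => ‖T h - g‖ ^ 2 + α * ‖h - p‖ ^ 2)
      (2 • (innerSL ℝ (T x - g)).comp T + α • 2 • (innerSL ℝ (x - p)).comp (1 : X →L[ℝ] X)) x :=
    ((T.hasFDerivAt.sub_const g).norm_sq).add
      (((hasFDerivAt_id x).sub_const p).norm_sq.const_mul α)
  have hzero := congrArg (· (tikhonovOp T α x - (adjoint T g + α • p)))
    (IsLocalMin.hasFDerivAt_eq_zero (Filter.Eventually.of_forall hmin) hderiv)
  have hz : tikhonovOp T α x - (adjoint T g + α • p) = adjoint T (T x - g) + α • (x - p) := by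
    rw [tikhonovOp_apply, map_sub, smul_sub]; abel
  rw [← sub_eq_zero, ← inner_self_eq_zero (𝕜 := ℝ)]
  simp only [hz, add_apply, smul_apply, comp_apply, innerSL_apply_apply, one_apply_eq_self,
    zero_apply, smul_eq_mul, nsmul_eq_mul, Nat.cast_ofNat] at hzero ⊢
  rw [inner_add_left, adjoint_inner_left, real_inner_smul_left]
  linarith

theorem isSelfAdjoint_tikhonovOp (α : ℝ) : IsSelfAdjoint (tikhonovOp T α) :=
  (isPositive_adjoint_comp_self T).isSelfAdjoint.add ((IsSelfAdjoint.all α).smul (.one _))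

theorem isUnit_tikhonovOp (hα : 0 < α) : IsUnit (tikhonovOp T α) :=
  isUnit_of_forall_le_norm_inner_map _ (Real.toNNReal_pos.mpr hα) fun x => by
    rw [inner_tikhonovOp_apply_self, Real.norm_eq_abs, Real.coe_toNNReal _ hα.le]
    exact (by nlinarith [sq_nonneg ‖T x‖] : ‖x‖ ^ 2 * α ≤ _).trans (le_abs_self _)

theorem isSelfAdjoint_tikhonovResolvent (α : ℝ) : IsSelfAdjoint (tikhonovResolvent T α) :=
  (isSelfAdjoint_tikhonovOp T α).ringInverse

theorem commute_adjoint_comp_self_tikhonovResolvent (hα : 0 < α) :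
    Commute (adjoint T ∘L T) (tikhonovResolvent T α) := by
  obtain ⟨u, hu⟩ := isUnit_tikhonovOp T hα
  have h : Commute (adjoint T ∘L T) u :=
    hu ▸ (Commute.refl _).add_right ((Commute.one_right _).smul_right α)
  rw [tikhonovResolvent, ← hu, Ring.inverse_unit]
  exact h.units_inv_right

theorem tikhonovOp_tikhonovResolvent_apply (hα : 0 < α) (x : X) :
    tikhonovOp T α (tikhonovResolvent T α x) = x := by
  rw [tikhonovResolvent, ← mul_apply_eq_comp, Ring.mul_inverse_cancel _ (isUnit_tikhonovOp T hα),
    one_apply_eq_self]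

theorem tikhonovResolvent_tikhonovOp_apply (hα : 0 < α) (x : X) :
    tikhonovResolvent T α (tikhonovOp T α x) = x := by
  rw [tikhonovResolvent, ← mul_apply_eq_comp, Ring.inverse_mul_cancel _ (isUnit_tikhonovOp T hα),
    one_apply_eq_self]

theorem mul_norm_le_of_tikhonovOp_apply_eq {u x : X} (h : tikhonovOp T α u = x) :
    α * ‖u‖ ≤ ‖x‖ := by
  have hinner := inner_tikhonovOp_apply_self T (α := α) u
  rw [h] at hinner
  rcases (norm_nonneg u).eq_or_lt with hu | hu
  · rw [← hu, mul_zero]; exact norm_nonneg x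
  refine le_of_mul_le_mul_right ?_ hu
  nlinarith [real_inner_le_norm x u, sq_nonneg ‖T u‖]

theorem mul_norm_apply_sq_le_of_tikhonovOp_apply_eq {u x : X}
    (h : tikhonovOp T α u = x) : α * ‖T u‖ ^ 2 ≤ ‖x‖ ^ 2 := by
  have hinner := inner_tikhonovOp_apply_self T (α := α) u
  rw [h] at hinner
  rcases le_or_gt α 0 with hα | hα
  · nlinarith [sq_nonneg ‖T u‖, sq_nonneg ‖x‖]
  · nlinarith [mul_le_mul_of_nonneg_left (real_inner_le_norm x u) hα.le,
      sq_nonneg (‖x‖ - 2 * α * ‖u‖)]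

theorem norm_adjoint_comp_self_apply_le_of_tikhonovOp_apply_eq (hα : 0 ≤ α) {u x : X}
    (h : tikhonovOp T α u = x) : ‖adjoint T (T u)‖ ≤ ‖x‖ := by
  have hcross : 0 ≤ ⟪adjoint T (T u), α • u⟫ := by
    rw [adjoint_inner_left, map_smul, real_inner_smul_right, real_inner_self_eq_norm_sq]
    positivity
  rw [← h, tikhonovOp_apply, ← sq_le_sq₀ (norm_nonneg _) (norm_nonneg _), norm_add_sq_real]
  nlinarith [sq_nonneg ‖α • u‖]

theorem four_mul_mul_norm_sq_le_of_tikhonovOp_apply_eq_adjoint {u : X} {ξ : Y}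
    (h : tikhonovOp T α u = adjoint T ξ) : 4 * α * ‖u‖ ^ 2 ≤ ‖ξ‖ ^ 2 := by
  have hinner := inner_tikhonovOp_apply_self T (α := α) u
  rw [h, adjoint_inner_left] at hinner
  nlinarith [real_inner_le_norm ξ (T u), sq_nonneg (‖ξ‖ - 2 * ‖T u‖)]

theorem norm_smul_tikhonovResolvent_apply_le (hα : 0 < α) (x : X) :
    ‖(α • tikhonovResolvent T α) x‖ ≤ ‖x‖ := by
  rw [smul_apply, norm_smul, Real.norm_of_nonneg hα.le]
  exact mul_norm_le_of_tikhonovOp_apply_eq T (tikhonovOp_tikhonovResolvent_apply T hα x)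

theorem norm_adjoint_comp_self_mul_tikhonovResolvent_apply_le (hα : 0 < α) (x : X) :
    ‖(adjoint T ∘L T * tikhonovResolvent T α) x‖ ≤ ‖x‖ :=
  norm_adjoint_comp_self_apply_le_of_tikhonovOp_apply_eq T hα.le
    (tikhonovOp_tikhonovResolvent_apply T hα x)

theorem sub_eq_tikhonovResolvent_add_of_isMin (hα : 0 < α) {g : Y} {p x : X}
    (hmin : ∀ h, ‖T x - g‖ ^ 2 + α * ‖x - p‖ ^ 2 ≤ ‖T h - g‖ ^ 2 + α * ‖h - p‖ ^ 2) (y : X) :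
    x - y =
      tikhonovResolvent T α (adjoint T (g - T y)) + (α • tikhonovResolvent T α) (p - y) := by
  have hop : tikhonovOp T α (x - y) = adjoint T (g - T y) + α • (p - y) := by
    rw [map_sub, tikhonovOp_apply_eq_of_isMin T hmin, tikhonovOp_apply, map_sub, smul_sub]; abel
  rw [← tikhonovResolvent_tikhonovOp_apply T hα (x - y), hop, map_add, map_smul, smul_apply]

theorem norm_sub_le_of_forall_isMin (hα : 0 < α) {g : Y} {f : ℕ → X} (hf0 : f 0 = 0)
    (hmin : ∀ k h, ‖T (f (k + 1)) - g‖ ^ 2 + α * ‖f (k + 1) - f k‖ ^ 2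
      ≤ ‖T h - g‖ ^ 2 + α * ‖h - f k‖ ^ 2) (y : X) (m : ℕ) :
    ‖f m - y‖ ≤ m * ‖tikhonovResolvent T α (adjoint T (g - T y))‖
      + ‖((α • tikhonovResolvent T α) ^ m) y‖ := by
  have hnoise := norm_sub_pow_apply_le_of_forall_succ_eq (e := fun k => f k - y)
    (norm_smul_tikhonovResolvent_apply_le T hα)
    (fun k => sub_eq_tikhonovResolvent_add_of_isMin T hα (hmin k) y) m
  rw [hf0, zero_sub, map_neg, sub_neg_eq_add] at hnoise
  exact (norm_le_add_norm_add _ _).trans (by gcongr)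

theorem norm_sq_smul_tikhonovResolvent_pow_apply_le (hα : 0 < α) {q m : ℕ} (hqm : q < m)
    {ω : X} {Φ : ℝ → ℝ} {ψ : ℝ} (hω : ∀ f : X, ⟪ω, f⟫ ≤ 1 / 2 * ‖f‖ ^ 2 + Φ (‖T f‖ ^ 2))
    (hψ : ∀ t : ℝ, 0 ≤ t → -t / α + Φ t ≤ ψ) :
    ‖((α • tikhonovResolvent T α) ^ m) (((adjoint T ∘L T) ^ q) ω)‖ ^ 2 ≤
      6 * α ^ (2 * q) * ψ := by
  obtain ⟨p, rfl⟩ : ∃ p, m = q + p + 1 := ⟨m - q - 1, by omega⟩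
  set A := adjoint T ∘L T
  set K := α • tikhonovResolvent T α
  set v := (K ^ (q + p + 1)) ((A ^ q) ω)
  set z := ((A * tikhonovResolvent T α) ^ q) ((K ^ p) v)
  have hz : ‖z‖ ≤ ‖v‖ :=
    (norm_pow_apply_le_of_forall_norm_apply_le
      (norm_adjoint_comp_self_mul_tikhonovResolvent_apply_le T hα) _ _).trans
      (norm_pow_apply_le_of_forall_norm_apply_le (norm_smul_tikhonovResolvent_apply_le T hα) _ _)
  set w := (A ^ q) ((K ^ (q + p + 1)) v)
  have hfac :
      A ^ q * K ^ (q + p + 1) = α ^ q • (K * ((A * tikhonovResolvent T α) ^ q * K ^ p)) :=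
    (commute_adjoint_comp_self_tikhonovResolvent T hα).pow_mul_smul_pow_eq α q p
  have hw : w = α ^ q • K z := by
    rw [show w = (A ^ q * K ^ (q + p + 1)) v from rfl, hfac]
    rfl
  have hωw : ⟪ω, w⟫ = ‖v‖ ^ 2 := by
    have hA := ((isPositive_adjoint_comp_self T).isSelfAdjoint.pow q).isSymmetric
    have hK := (((IsSelfAdjoint.all α).smul (isSelfAdjoint_tikhonovResolvent T α)).pow
      (q + p + 1)).isSymmetric
    rw [← real_inner_self_eq_norm_sq]
    exact (hA _ _).symm.trans (hK _ _).symm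
  have hnorm_w : ‖w‖ ^ 2 ≤ α ^ (2 * q) * ‖v‖ ^ 2 := by
    rw [hw, norm_smul, Real.norm_of_nonneg (by positivity), mul_pow, ← pow_mul, mul_comm q]
    gcongr
    exact (norm_smul_tikhonovResolvent_apply_le T hα z).trans hz
  have hnorm_Tw : ‖T w‖ ^ 2 ≤ α * α ^ (2 * q) * ‖v‖ ^ 2 := by
    have hTR := mul_norm_apply_sq_le_of_tikhonovOp_apply_eq T
      (tikhonovOp_tikhonovResolvent_apply T hα z)
    calc ‖T w‖ ^ 2 = α ^ (2 * q) * α * (α * ‖T (tikhonovResolvent T α z)‖ ^ 2) := by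
          rw [hw, map_smul, smul_apply, map_smul, norm_smul, norm_smul,
            Real.norm_of_nonneg (by positivity), Real.norm_of_nonneg hα.le]
          ring
      _ ≤ α ^ (2 * q) * α * ‖v‖ ^ 2 := by gcongr; exact hTR.trans (by gcongr)
      _ = α * α ^ (2 * q) * ‖v‖ ^ 2 := by ring
  rw [← hωw] at hnorm_w hnorm_Tw ⊢
  exact inner_le_six_mul_of_forall_inner_le hα (by positivity) hω hψ hnorm_w hnorm_Tw

end Tikhonov

/-- Convergence rates for Bregman iterated Tikhonov regularization in
Hilbert spaces under the odd-order variational source condition `VSC^{2n−1}(f†, Φ)`: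
there is `C > 0` depending only on `n` and `m ≥ n` such that
`‖f_m − f†‖² ≤ C (δ²/α + α^{2n−2} ψ)` whenever `ψ` dominates `sup_{t≥0} (−t/α + Φ(t))`. -/
theorem stmt_2 (n m : ℕ) (hn : 1 ≤ n) (hnm : n ≤ m) :
    ∃ C : ℝ, 0 < C ∧
      ∀ (X Y : Type*) [NormedAddCommGroup X] [InnerProductSpace ℝ X] [CompleteSpace X]
        [NormedAddCommGroup Y] [InnerProductSpace ℝ Y] [CompleteSpace Y],
        ∀ (T : X →L[ℝ] Y) (fdag : X) (Φ : ℝ → ℝ),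
        -- Φ is a concave index function
        ContinuousOn Φ (Set.Ici 0) → MonotoneOn Φ (Set.Ici 0) → Φ 0 = 0 →
        (∀ t : ℝ, 0 ≤ t → 0 ≤ Φ t) → ConcaveOn ℝ (Set.Ici 0) Φ →
        -- VSC^{2n−1}(f†, Φ)
        (∃ ω : X,
          fdag = ((ContinuousLinearMap.adjoint T ∘L T) ^ (n - 1)) ω ∧
          ∀ f : X, ⟪ω, f⟫ ≤ 1 / 2 * ‖f‖ ^ 2 + Φ (‖T f‖ ^ 2)) →
        ∀ α δ : ℝ, 0 < α → 0 < δ →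
          ∀ g : Y, ‖g - T fdag‖ ≤ δ →
            -- Bregman iterated Tikhonov sequence for the data (g, α)
            ∀ f : ℕ → X, f 0 = 0 →
              (∀ k : ℕ, 1 ≤ k → ∀ h : X,
                ‖T (f k) - g‖ ^ 2 + α * ‖f k - f (k - 1)‖ ^ 2
                  ≤ ‖T h - g‖ ^ 2 + α * ‖h - f (k - 1)‖ ^ 2) →
              ∀ ψ : ℝ, (∀ t : ℝ, 0 ≤ t → -t / α + Φ t ≤ ψ) →
                ‖f m - fdag‖ ^ 2 ≤ C * (δ ^ 2 / α + α ^ (2 * n - 2) * ψ) := by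
  obtain ⟨q, rfl⟩ : ∃ q, n = q + 1 := ⟨n - 1, by omega⟩
  refine ⟨(m : ℝ) ^ 2 + 12, by positivity, ?_⟩
  intro X Y _ _ _ _ _ _ T fdag Φ _ _ _ _ _ ⟨ω, hfdag, hω⟩ α δ hα _ g hg f hf0 hmin ψ hψ
  set c := tikhonovResolvent T α (adjoint T (g - T fdag))
  set v := ((α • tikhonovResolvent T α) ^ m) fdag
  have herr : ‖f m - fdag‖ ≤ m * ‖c‖ + ‖v‖ :=
    norm_sub_le_of_forall_isMin T hα hf0 (fun k => by simpa using hmin (k + 1) (by omega)) fdag m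
  have hnoise : 4 * ‖c‖ ^ 2 ≤ δ ^ 2 / α := by
    rw [le_div_iff₀ hα]
    nlinarith [four_mul_mul_norm_sq_le_of_tikhonovOp_apply_eq_adjoint T
      (tikhonovOp_tikhonovResolvent_apply T hα (adjoint T (g - T fdag))),
      pow_le_pow_left₀ (norm_nonneg _) hg 2]
  have happrox : ‖v‖ ^ 2 ≤ 6 * α ^ (2 * q) * ψ := by
    simp only [v, hfdag, Nat.add_sub_cancel]
    exact norm_sq_smul_tikhonovResolvent_pow_apply_le T hα (by omega) hω hψ
  have hψ₀ : 0 ≤ α ^ (2 * q) * ψ := by nlinarith [sq_nonneg ‖v‖]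
  rw [show 2 * (q + 1) - 2 = 2 * q by omega]
  calc ‖f m - fdag‖ ^ 2 ≤ (m * ‖c‖ + ‖v‖) ^ 2 := by gcongr
    _ ≤ 2 * ((m * ‖c‖) ^ 2 + ‖v‖ ^ 2) := add_sq_le
    _ ≤ ((m : ℝ) ^ 2 + 12) * (δ ^ 2 / α + α ^ (2 * q) * ψ) := by
        nlinarith [mul_le_mul_of_nonneg_left hnoise (sq_nonneg (m : ℝ)),
          mul_nonneg (sq_nonneg (m : ℝ)) hψ₀]
end

section
/- Let X, Y be real Hilbert spaces, T : X → Y a bounded linear operator, f† ∈ X, α > 0, δ ≥ 0, and g ∈ Y with ‖g − T f†‖ ≤ δ. Let f_prev ∈ X and suppose f_k ∈ X minimizes h ↦ ‖T h − g‖² + α ‖h − f_prev‖² over X. Then ‖f_k − f†‖² ≤ 2δ²/α + 4‖f_prev − f†‖². -/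
/-- One step of (Bregman iterated) Tikhonov regularization in
Hilbert spaces satisfies `‖f_k − f†‖² ≤ 2δ²/α + 4‖f_prev − f†‖²`. -/
theorem stmt_4 {X Y : Type*}
    [NormedAddCommGroup X] [InnerProductSpace ℝ X] [CompleteSpace X]
    [NormedAddCommGroup Y] [InnerProductSpace ℝ Y] [CompleteSpace Y]
    (T : X →L[ℝ] Y) (fdag : X) (α δ : ℝ) (hα : 0 < α) (hδ : 0 ≤ δ)
    (g : Y) (hg : ‖g - T fdag‖ ≤ δ) (fprev fk : X)
    (hfk : ∀ h : X, ‖T fk - g‖ ^ 2 + α * ‖fk - fprev‖ ^ 2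
      ≤ ‖T h - g‖ ^ 2 + α * ‖h - fprev‖ ^ 2) :
    ‖fk - fdag‖ ^ 2 ≤ 2 * δ ^ 2 / α + 4 * ‖fprev - fdag‖ ^ 2 := by
  have h1 := hfk fdag
  have hT : ‖T fdag - g‖ ≤ δ := by rwa [norm_sub_rev]
  have hT2 : ‖T fdag - g‖ ^ 2 ≤ δ ^ 2 := by
    have := norm_nonneg (T fdag - g)
    nlinarith
  have hb : ‖fdag - fprev‖ = ‖fprev - fdag‖ := norm_sub_rev _ _
  have ha2 : α * ‖fk - fprev‖ ^ 2 ≤ δ ^ 2 + α * ‖fprev - fdag‖ ^ 2 := by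
    have hTk := sq_nonneg ‖T fk - g‖
    rw [hb] at h1
    nlinarith
  have htri : ‖fk - fdag‖ ≤ ‖fk - fprev‖ + ‖fprev - fdag‖ := norm_sub_le_norm_sub_add_norm_sub _ _ _
  have hc : ‖fk - fdag‖ ^ 2 ≤ 2 * ‖fk - fprev‖ ^ 2 + 2 * ‖fprev - fdag‖ ^ 2 := by
    have := norm_nonneg (fk - fdag)
    nlinarith [sq_nonneg (‖fk - fprev‖ - ‖fprev - fdag‖)]
  rw [div_add' _ _ _ (ne_of_gt hα), le_div_iff₀ hα]
  nlinarith
end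

section
/- Let X, Y be real Hilbert spaces, T : X → Y a bounded linear operator, g ∈ Y, α > 0, f_prev ∈ X, and suppose f_k ∈ X minimizes h ↦ (1/(2α))‖T h − g‖² + (1/2)‖h − f_prev‖² over X. Then for every f ∈ X: (1/2)‖f_k − f‖² ≤ (1/(2α))(‖T f − g‖² − ‖T f_k − g‖²) − ⟪f − f_prev, f_k − f⟫. -/
open scoped RealInnerProductSpace

/-- Basic recursive estimate for one step of Bregman iterated Tikhonov
regularization in Hilbert spaces: for all `f ∈ X`,
`(1/2)‖f_k − f‖² ≤ (1/(2α))(‖Tf − g‖² − ‖Tf_k − g‖²) − ⟪f − f_prev, f_k − f⟫`. -/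
theorem stmt_5 {X Y : Type*}
    [NormedAddCommGroup X] [InnerProductSpace ℝ X] [CompleteSpace X]
    [NormedAddCommGroup Y] [InnerProductSpace ℝ Y] [CompleteSpace Y]
    (T : X →L[ℝ] Y) (g : Y) (α : ℝ) (hα : 0 < α) (fprev fk : X)
    (hfk : ∀ h : X, 1 / (2 * α) * ‖T fk - g‖ ^ 2 + 1 / 2 * ‖fk - fprev‖ ^ 2
      ≤ 1 / (2 * α) * ‖T h - g‖ ^ 2 + 1 / 2 * ‖h - fprev‖ ^ 2) :
    ∀ f : X, 1 / 2 * ‖fk - f‖ ^ 2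
      ≤ 1 / (2 * α) * (‖T f - g‖ ^ 2 - ‖T fk - g‖ ^ 2) - ⟪f - fprev, fk - f⟫ := by
  intro f
  have h1 := hfk f
  have hdec : fk - fprev = (fk - f) + (f - fprev) := by abel
  have key : ‖fk - fprev‖ ^ 2
      = ‖fk - f‖ ^ 2 + 2 * ⟪fk - f, f - fprev⟫ + ‖f - fprev‖ ^ 2 := by
    rw [hdec, norm_add_sq_real]
  have hcomm : ⟪f - fprev, fk - f⟫ = ⟪fk - f, f - fprev⟫ := real_inner_comm _ _
  rw [mul_sub, hcomm]
  linarith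
end

section
/- Let X, Y be real Hilbert spaces, T : X → Y a bounded linear operator, f† ∈ X, ω̄ ∈ X, Φ : [0,∞) → [0,∞) an index function, β ≥ 0, μ > 1 and t̄ > 0. Then the following are equivalent: (i) for all f ∈ X, ⟪ω̄, f⟫ ≤ (1/2)‖f‖² + Φ(‖T f‖²); (ii) for all f ∈ X and all t ∈ (0, t̄], ⟪−t ω̄, f† − t ω̄ − f⟫ ≤ (1/2)‖f − f† + t ω̄‖² + t² Φ(t^{−2} ‖T f − T f† + t T ω̄‖²) + β t^{2μ}. -/
open scoped RealInnerProductSpace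

/-!
Writing `f = f† - t ω̄ + t g`, the two sides of the third order source condition at `(f, t)`
are `t²` times the two sides of the classical inequality at `g`, plus the slack `β t^{2μ}`
(`Φ` is only ever evaluated at `t⁻² ‖T (t g)‖² = ‖T g‖²`). Hence the classical inequality
implies the source condition, and conversely the source condition gives the classical
inequality up to an error `β t^{2μ-2}`, which vanishes as `t → 0⁺` since `μ > 1`.
-/

open Filter Set Topology

lemma le_of_forall_le_add_mul_rpow {a b β ε tbar : ℝ} (hε : 0 < ε) (htbar : 0 < tbar)
    (h : ∀ t ∈ Ioc 0 tbar, a ≤ b + β * t ^ ε) : a ≤ b := by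
  have hlim : Tendsto (fun t : ℝ => b + β * t ^ ε) (𝓝[>] 0) (𝓝 b) := by
    have hpow : Tendsto (fun t : ℝ => t ^ ε) (𝓝[>] 0) (𝓝 0) := by
      simpa [Real.zero_rpow hε.ne'] using
        (Real.continuousAt_rpow_const 0 ε (Or.inr hε.le)).tendsto.mono_left nhdsWithin_le_nhds
    simpa using (hpow.const_mul β).const_add b
  refine ge_of_tendsto hlim ?_
  filter_upwards [Ioc_mem_nhdsGT htbar] with t ht
  exact h t ht

lemma le_of_forall_sq_mul_le_sq_mul_add_mul_rpow {a b β μ tbar : ℝ} (hμ : 1 < μ)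
    (htbar : 0 < tbar) (h : ∀ t ∈ Ioc 0 tbar, t ^ 2 * a ≤ t ^ 2 * b + β * t ^ (2 * μ)) :
    a ≤ b := by
  refine le_of_forall_le_add_mul_rpow (β := β) (by linarith : 0 < 2 * μ - 2) htbar fun t ht => ?_
  have hsplit : t ^ (2 * μ) = t ^ 2 * t ^ (2 * μ - 2) := by
    rw [← Real.rpow_two, ← Real.rpow_add ht.1]
    ring_nf
  refine le_of_mul_le_mul_left ?_ (pow_pos ht.1 2)
  calc t ^ 2 * a ≤ t ^ 2 * b + β * t ^ (2 * μ) := h t ht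
    _ = t ^ 2 * (b + β * t ^ (2 * μ - 2)) := by rw [hsplit]; ring

section SourceCondition

variable {X Y : Type*} [NormedAddCommGroup X] [InnerProductSpace ℝ X]
  [NormedAddCommGroup Y] [InnerProductSpace ℝ Y]

lemma third_order_source_condition_at_shift_iff (T : X →L[ℝ] Y) (fdag ωbar g : X)
    (Φ : ℝ → ℝ) (β μ : ℝ) {t : ℝ} (ht : t ≠ 0) :
    ⟪(-t) • ωbar, fdag - t • ωbar - (fdag - t • ωbar + t • g)⟫
        ≤ 1 / 2 * ‖fdag - t • ωbar + t • g - fdag + t • ωbar‖ ^ 2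
          + t ^ 2 * Φ ((t ^ 2)⁻¹
              * ‖T (fdag - t • ωbar + t • g) - T fdag + t • T ωbar‖ ^ 2)
          + β * t ^ (2 * μ)
      ↔ t ^ 2 * ⟪ωbar, g⟫ ≤ t ^ 2 * (1 / 2 * ‖g‖ ^ 2 + Φ (‖T g‖ ^ 2)) + β * t ^ (2 * μ) := by
  have hdiff : fdag - t • ωbar - (fdag - t • ωbar + t • g) = -(t • g) := by abel
  have hshift : fdag - t • ωbar + t • g - fdag + t • ωbar = t • g := by abel
  have himage : T (fdag - t • ωbar + t • g) - T fdag + t • T ωbar = t • T g := by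
    simp only [map_add, map_sub, map_smul]
    abel
  have hinner : ⟪(-t) • ωbar, -(t • g)⟫ = t ^ 2 * ⟪ωbar, g⟫ := by
    rw [real_inner_smul_left, inner_neg_right, real_inner_smul_right]
    ring
  rw [hdiff, hshift, himage, hinner, norm_smul, norm_smul, mul_pow, mul_pow, Real.norm_eq_abs,
    sq_abs, inv_mul_cancel_left₀ (pow_ne_zero 2 ht)]
  constructor <;> intro h <;> linarith

end SourceCondition

theorem stmt_6_general {X Y : Type*}
    [NormedAddCommGroup X] [InnerProductSpace ℝ X]
    [NormedAddCommGroup Y] [InnerProductSpace ℝ Y]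
    (T : X →L[ℝ] Y) (fdag ωbar : X) (Φ : ℝ → ℝ)
    (β μ tbar : ℝ) (hβ : 0 ≤ β) (hμ : 1 < μ) (htbar : 0 < tbar) :
    (∀ f : X, ⟪ωbar, f⟫ ≤ 1 / 2 * ‖f‖ ^ 2 + Φ (‖T f‖ ^ 2)) ↔
    (∀ f : X, ∀ t : ℝ, t ∈ Set.Ioc 0 tbar →
      ⟪(-t) • ωbar, fdag - t • ωbar - f⟫
        ≤ 1 / 2 * ‖f - fdag + t • ωbar‖ ^ 2
          + t ^ 2 * Φ ((t ^ 2)⁻¹ * ‖T f - T fdag + t • T ωbar‖ ^ 2)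
          + β * t ^ (2 * μ)) := by
  constructor
  · intro hclassical f t ht
    obtain ⟨g, rfl⟩ : ∃ g, f = fdag - t • ωbar + t • g :=
      ⟨t⁻¹ • (f - fdag + t • ωbar), by rw [smul_inv_smul₀ ht.1.ne']; abel⟩
    rw [third_order_source_condition_at_shift_iff T fdag ωbar g Φ β μ ht.1.ne']
    exact le_add_of_le_of_nonneg (mul_le_mul_of_nonneg_left (hclassical g) (sq_nonneg t))
      (mul_nonneg hβ (Real.rpow_nonneg ht.1.le _))
  · intro hvsc g
    refine le_of_forall_sq_mul_le_sq_mul_add_mul_rpow (β := β) hμ htbar fun t ht => ?_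
    exact (third_order_source_condition_at_shift_iff T fdag ωbar g Φ β μ ht.1.ne').1
      (hvsc _ t ht)

/-- In Hilbert spaces, the third order variational source condition
`VSC³(f†, Φ, ‖·‖²/2, ‖·‖²/2)` is equivalent to the classical variational inequality
`⟪ω̄, f⟫ ≤ (1/2)‖f‖² + Φ(‖Tf‖²)` for all `f ∈ X`. -/
theorem stmt_6 {X Y : Type*}
    [NormedAddCommGroup X] [InnerProductSpace ℝ X] [CompleteSpace X]
    [NormedAddCommGroup Y] [InnerProductSpace ℝ Y] [CompleteSpace Y]
    (T : X →L[ℝ] Y) (fdag ωbar : X) (Φ : ℝ → ℝ)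
    -- Φ is an index function
    (hΦcont : ContinuousOn Φ (Set.Ici 0)) (hΦmono : MonotoneOn Φ (Set.Ici 0))
    (hΦ0 : Φ 0 = 0) (hΦnonneg : ∀ t : ℝ, 0 ≤ t → 0 ≤ Φ t)
    (β μ tbar : ℝ) (hβ : 0 ≤ β) (hμ : 1 < μ) (htbar : 0 < tbar) :
    (∀ f : X, ⟪ωbar, f⟫ ≤ 1 / 2 * ‖f‖ ^ 2 + Φ (‖T f‖ ^ 2)) ↔
    (∀ f : X, ∀ t : ℝ, t ∈ Set.Ioc 0 tbar →
      ⟪(-t) • ωbar, fdag - t • ωbar - f⟫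
        ≤ 1 / 2 * ‖f - fdag + t • ωbar‖ ^ 2
          + t ^ 2 * Φ ((t ^ 2)⁻¹ * ‖T f - T fdag + t • T ωbar‖ ^ 2)
          + β * t ^ (2 * μ)) :=
  stmt_6_general T fdag ωbar Φ β μ tbar hβ hμ htbar
end

section
/- Let X, Y be real normed spaces, T : X → Y bounded linear, q > 1 with conjugate q*, S(y) := (1/q)‖y‖^q, S*(p) := (1/q*)‖p‖^{q*}, α > 0, g ∈ Y, and R : X → ℝ convex. Assume: f† ∈ X and p̄ ∈ Y* with p̄ ∘ T ∈ ∂R(f†); f₁ ∈ X minimizes h ↦ (1/α)S(Th − g) + R(h); p̂ ∈ Y* satisfies p̂ ∘ T ∈ ∂R(f₁) and −α p̂ ∈ ∂S(T f₁ − g); f₂ ∈ X minimizes h ↦ (1/α)S(Th − g) + D_R^{p̂∘T}(h, f₁); p₂ ∈ Y* satisfies −α p₂ ∈ ∂S(T f₂ − g); G ∈ Y satisfies S*(−α p̄) + (p + α p̄)(G) ≤ S*(p) for all p ∈ Y* (i.e. G ∈ ∂S*(−α p̄)); and c* > 0 satisfies S*(p) − S*(−α p̄) − (p + α p̄)(G)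 ≥ (c*/q*)‖p + α p̄‖^{q*} for all p ∈ Y*. Then D_R^{p̄∘T}(f₂, f†) ≤ (2/α) ( S(T f† − g) + (1/c*) [ S*(−α p̂) − S*(−α p̄) − (−α p̂ + α p̄)(G) ] ). -/
/-!
Testing the minimality of `f₂` against `f†` bounds `D_R^{p̄∘T}(f₂, f†)` by
`(1/α)(S(Tf† − g) − S(Tf₂ − g)) + (p̂ − p̄)(Tf₂ − Tf†)`. Splitting `Tf₂ − Tf† = (Tf₂ − g) − (Tf† − g)`
and applying Young's inequality `φ y ≤ S*(φ) + S(y)` to each piece with `φ = ±α(p̂ − p̄)`, the term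
`S(Tf₂ − g)` cancels and `α D ≤ 2 S(Tf† − g) + 2 S*(α(p̂ − p̄))`. The `q*`-convexity estimate for `S*`
at `p = −αp̂` bounds `S*(α(p̂ − p̄))` by `1/c*` times the dual Bregman distance.
-/

namespace ContinuousLinearMap

variable {E : Type*} [SeminormedAddCommGroup E] [NormedSpace ℝ E] {p q : ℝ}

theorem apply_le_young_s8 (hpq : p.HolderConjugate q) (φ : E →L[ℝ] ℝ) (y : E) :
    φ y ≤ 1 / p * ‖φ‖ ^ p + 1 / q * ‖y‖ ^ q :=
  calc φ y ≤ ‖φ‖ * ‖y‖ := (Real.le_norm_self _).trans (φ.le_opNorm y)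
    _ ≤ ‖φ‖ ^ p / p + ‖y‖ ^ q / q :=
      Real.young_inequality_of_nonneg (norm_nonneg _) (norm_nonneg _) hpq
    _ = 1 / p * ‖φ‖ ^ p + 1 / q * ‖y‖ ^ q := by ring

theorem apply_sub_le_young (hpq : p.HolderConjugate q) (φ : E →L[ℝ] ℝ) (y₁ y₂ : E) :
    φ (y₁ - y₂) ≤ 2 * (1 / p * ‖φ‖ ^ p) + 1 / q * ‖y₁‖ ^ q + 1 / q * ‖y₂‖ ^ q := by
  have h₁ := φ.apply_le_young_s8 hpq y₁
  have h₂ := (-φ).apply_le_young_s8 hpq y₂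
  rw [norm_neg, neg_apply] at h₂
  rw [map_sub]
  linarith

end ContinuousLinearMap

theorem stmt_8_general {X Y : Type*} [NormedAddCommGroup X] [NormedSpace ℝ X]
    [NormedAddCommGroup Y] [NormedSpace ℝ Y]
    (T : X →L[ℝ] Y) (q qs : ℝ) (hq : 1 < q) (hqs : 1 / q + 1 / qs = 1)
    (α : ℝ) (hα : 0 < α) (g : Y)
    (R : X → ℝ)
    (fdag : X) (pbar : Y →L[ℝ] ℝ)
    (f₁ : X)
    (phat : Y →L[ℝ] ℝ)
    -- f₂ minimizes the Bregman iterated Tikhonov functional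
    (f₂ : X)
    (hf₂ : ∀ h : X,
      1 / α * (1 / q * ‖T f₂ - g‖ ^ q) + (R f₂ - R f₁ - (phat.comp T) (f₂ - f₁))
        ≤ 1 / α * (1 / q * ‖T h - g‖ ^ q) + (R h - R f₁ - (phat.comp T) (h - f₁)))
    (G : Y)
    -- q*-convexity estimate for S*
    (cstar : ℝ) (hcstar : 0 < cstar)
    (hXR : ∀ p : Y →L[ℝ] ℝ,
      1 / qs * ‖p‖ ^ qs - 1 / qs * ‖(-α) • pbar‖ ^ qs - (p + α • pbar) G
        ≥ cstar / qs * ‖p + α • pbar‖ ^ qs) :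
    R f₂ - R fdag - (pbar.comp T) (f₂ - fdag)
      ≤ 2 / α * (1 / q * ‖T fdag - g‖ ^ q
        + 1 / cstar * (1 / qs * ‖(-α) • phat‖ ^ qs - 1 / qs * ‖(-α) • pbar‖ ^ qs
          - ((-α) • phat + α • pbar) G)) := by
  have hconj : qs.HolderConjugate q :=
    (Real.holderConjugate_iff.mpr ⟨hq, by simpa only [one_div] using hqs⟩).symm
  have hmin : R f₂ - R fdag - (pbar.comp T) (f₂ - fdag)
      ≤ 1 / α * (1 / q * ‖T fdag - g‖ ^ q - 1 / q * ‖T f₂ - g‖ ^ q)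
        + (phat - pbar) ((T f₂ - g) - (T fdag - g)) := by
    have h := hf₂ fdag
    simp only [ContinuousLinearMap.comp_apply, sub_apply, map_sub] at h ⊢
    linarith
  have hyoung := (α • (phat - pbar)).apply_sub_le_young hconj (T f₂ - g) (T fdag - g)
  rw [smul_apply, smul_eq_mul] at hyoung
  have hdual : 1 / qs * ‖α • (phat - pbar)‖ ^ qs
      ≤ 1 / cstar * (1 / qs * ‖(-α) • phat‖ ^ qs - 1 / qs * ‖(-α) • pbar‖ ^ qs
        - ((-α) • phat + α • pbar) G) := by
    have h := hXR ((-α) • phat)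
    rw [show (-α) • phat + α • pbar = -(α • (phat - pbar)) by module] at h ⊢
    rw [norm_neg] at h
    calc 1 / qs * ‖α • (phat - pbar)‖ ^ qs
        = 1 / cstar * (cstar / qs * ‖α • (phat - pbar)‖ ^ qs) := by field_simp
      _ ≤ _ := by gcongr
  calc R f₂ - R fdag - (pbar.comp T) (f₂ - fdag)
      ≤ 2 / α * (1 / q * ‖T fdag - g‖ ^ q + 1 / qs * ‖α • (phat - pbar)‖ ^ qs) := by
        have h := mul_le_mul_of_nonneg_left hmin hα.le
        rw [mul_add, ← mul_assoc, mul_one_div_cancel hα.ne', one_mul] at h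
        rw [div_mul_eq_mul_div, le_div_iff₀ hα]
        linarith
    _ ≤ _ := by gcongr

/-- Error bound for the second Bregman iterate in terms of the dual
Bregman distance (Lemma `starting_lemma` of the paper):
`D_R^{p̄∘T}(f₂, f†) ≤ (2/α)( S(Tf†−g) + (1/c*) D_{S*}^G(−αp̂, −αp̄) )`. -/
theorem stmt_8 {X Y : Type*} [NormedAddCommGroup X] [NormedSpace ℝ X]
    [NormedAddCommGroup Y] [NormedSpace ℝ Y]
    (T : X →L[ℝ] Y) (q qs : ℝ) (hq : 1 < q) (hqs : 1 / q + 1 / qs = 1)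
    (α : ℝ) (hα : 0 < α) (g : Y)
    (R : X → ℝ) (hR : ConvexOn ℝ Set.univ R)
    -- source condition p̄ ∘ T ∈ ∂R(f†)
    (fdag : X) (pbar : Y →L[ℝ] ℝ)
    (hpbar : ∀ h : X, R fdag + (pbar.comp T) (h - fdag) ≤ R h)
    -- f₁ minimizes the Tikhonov functional
    (f₁ : X)
    (hf₁ : ∀ h : X, 1 / α * (1 / q * ‖T f₁ - g‖ ^ q) + R f₁
      ≤ 1 / α * (1 / q * ‖T h - g‖ ^ q) + R h)
    -- p̂ ∘ T ∈ ∂R(f₁) and −α p̂ ∈ ∂S(T f₁ − g)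
    (phat : Y →L[ℝ] ℝ)
    (hphat₁ : ∀ h : X, R f₁ + (phat.comp T) (h - f₁) ≤ R h)
    (hphat₂ : ∀ y : Y, 1 / q * ‖T f₁ - g‖ ^ q + ((-α) • phat) (y - (T f₁ - g))
      ≤ 1 / q * ‖y‖ ^ q)
    -- f₂ minimizes the Bregman iterated Tikhonov functional
    (f₂ : X)
    (hf₂ : ∀ h : X,
      1 / α * (1 / q * ‖T f₂ - g‖ ^ q) + (R f₂ - R f₁ - (phat.comp T) (f₂ - f₁))
        ≤ 1 / α * (1 / q * ‖T h - g‖ ^ q) + (R h - R f₁ - (phat.comp T) (h - f₁)))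
    -- −α p₂ ∈ ∂S(T f₂ − g)
    (p₂ : Y →L[ℝ] ℝ)
    (hp₂ : ∀ y : Y, 1 / q * ‖T f₂ - g‖ ^ q + ((-α) • p₂) (y - (T f₂ - g))
      ≤ 1 / q * ‖y‖ ^ q)
    -- G ∈ ∂S*(−α p̄)
    (G : Y)
    (hG : ∀ p : Y →L[ℝ] ℝ,
      1 / qs * ‖(-α) • pbar‖ ^ qs + (p + α • pbar) G ≤ 1 / qs * ‖p‖ ^ qs)
    -- q*-convexity estimate for S*
    (cstar : ℝ) (hcstar : 0 < cstar)
    (hXR : ∀ p : Y →L[ℝ] ℝ,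
      1 / qs * ‖p‖ ^ qs - 1 / qs * ‖(-α) • pbar‖ ^ qs - (p + α • pbar) G
        ≥ cstar / qs * ‖p + α • pbar‖ ^ qs) :
    R f₂ - R fdag - (pbar.comp T) (f₂ - fdag)
      ≤ 2 / α * (1 / q * ‖T fdag - g‖ ^ q
        + 1 / cstar * (1 / qs * ‖(-α) • phat‖ ^ qs - 1 / qs * ‖(-α) • pbar‖ ^ qs
          - ((-α) • phat + α • pbar) G)) :=
  stmt_8_general T q qs hq hqs α hα g R fdag pbar f₁ phat f₂ hf₂ G cstar hcstar hXR
end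

section
/- Let q > 1 with conjugate exponent q*. There exists a constant C > 0, depending only on q, with the following property. Let X, Y be real normed spaces, T : X → Y bounded linear, S(y) := (1/q)‖y‖^q, S*(p) := (1/q*)‖p‖^{q*}, R : X → ℝ convex, f† ∈ X, p̄ ∈ Y* with p̄ ∘ T ∈ ∂R(f†), ω̄ ∈ X with S*(p̄) + (p − p̄)(T ω̄) ≤ S*(p) for all p ∈ Y* (i.e. T ω̄ ∈ ∂S*(p̄)), α > 0, δ ≥ 0, g ∈ Y with ‖g − T f†‖ ≤ δ, and f̂ ∈ X a minimizer of h ↦ (1/α)S(Th − g) + R(h). Then ‖T f̂ − T f†‖ ≤ C (δ + α^{q*−1} ‖T ω̄‖). -/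
set_option maxHeartbeats 1000000 in
/-- Convergence rates in the image space (Lemma `img_conv` of the paper):
under the benchmark source conditions `p̄ ∘ T ∈ ∂R(f†)` and `T ω̄ ∈ ∂S*(p̄)`, the
Tikhonov minimizer satisfies `‖T f̂ − T f†‖ ≤ C (δ + α^{q*−1} ‖T ω̄‖)` with `C`
depending only on `q`. -/
theorem stmt_9 (q qs : ℝ) (hq : 1 < q) (hqs : 1 / q + 1 / qs = 1) :
    ∃ C : ℝ, 0 < C ∧
      ∀ (X Y : Type*) [NormedAddCommGroup X] [NormedSpace ℝ X]
        [NormedAddCommGroup Y] [NormedSpace ℝ Y],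
        ∀ (T : X →L[ℝ] Y) (R : X → ℝ), ConvexOn ℝ Set.univ R →
        ∀ (fdag : X) (pbar : Y →L[ℝ] ℝ),
          (∀ h : X, R fdag + (pbar.comp T) (h - fdag) ≤ R h) →
        ∀ ωbar : X,
          (∀ p : Y →L[ℝ] ℝ,
            1 / qs * ‖pbar‖ ^ qs + (p - pbar) (T ωbar) ≤ 1 / qs * ‖p‖ ^ qs) →
        ∀ α δ : ℝ, 0 < α → 0 ≤ δ →
        ∀ g : Y, ‖g - T fdag‖ ≤ δ →
        ∀ fhat : X,
          (∀ h : X, 1 / α * (1 / q * ‖T fhat - g‖ ^ q) + R fhat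
            ≤ 1 / α * (1 / q * ‖T h - g‖ ^ q) + R h) →
        ‖T fhat - T fdag‖ ≤ C * (δ + α ^ (qs - 1) * ‖T ωbar‖) := by
  have hq0 : (0:ℝ) < q := lt_trans one_pos hq
  have hinvq : 1 / q < 1 := (div_lt_one hq0).mpr hq
  have hinvq0 : 0 < 1 / q := by positivity
  have hinvqs0 : 0 < 1 / qs := by linarith
  have hqs0 : 0 < qs := one_div_pos.mp hinvqs0
  have hqs1 : 1 < qs := (div_lt_one hqs0).mp (by linarith)
  have hsum : qs + q = q * qs := by
    field_simp at hqs
    linarith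
  have hprod : (qs - 1) * (q - 1) = 1 := by nlinarith [hsum]
  set E : ℝ := (8 * q) ^ (qs - 1) with hE
  have hE0 : 0 ≤ E := Real.rpow_nonneg (by positivity) _
  refine ⟨3 + E * qs, by positivity, ?_⟩
  intro X Y _ _ _ _ T R hR fdag pbar hsub ωbar hSsub α δ hα hδ g hg fhat hmin
  set a : ℝ := ‖T fhat - g‖ with ha
  set d : ℝ := ‖T fhat - T fdag‖ with hdd
  set M : ℝ := ‖pbar‖ with hM
  set W : ℝ := ‖T ωbar‖ with hW
  set K : ℝ := α * M with hK
  set B : ℝ := α ^ (qs - 1) * W with hB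
  have ha0 : 0 ≤ a := norm_nonneg _
  have hM0 : 0 ≤ M := norm_nonneg _
  have hW0 : 0 ≤ W := norm_nonneg _
  have hK0 : 0 ≤ K := mul_nonneg hα.le hM0
  have hB0 : 0 ≤ B := mul_nonneg (Real.rpow_nonneg hα.le _) hW0
  -- d ≤ a + δ
  have hd : d ≤ a + δ := by
    have h1 : T fhat - T fdag = (T fhat - g) + (g - T fdag) := by abel
    calc d = ‖(T fhat - g) + (g - T fdag)‖ := by rw [hdd, h1]
      _ ≤ ‖T fhat - g‖ + ‖g - T fdag‖ := norm_add_le _ _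
      _ ≤ a + δ := by rw [← ha]; linarith
  -- basic inequality
  have hDq : ‖T fdag - g‖ ^ q ≤ δ ^ q := by
    apply Real.rpow_le_rpow (norm_nonneg _) _ hq0.le
    rw [norm_sub_rev]; exact hg
  have hMd : -(pbar (T fhat - T fdag)) ≤ M * d := by
    have h1 := pbar.le_opNorm (T fhat - T fdag)
    have h2 : |pbar (T fhat - T fdag)| ≤ M * d := by
      simpa [Real.norm_eq_abs] using h1
    linarith [neg_abs_le (pbar (T fhat - T fdag))]
  have hcomp : (pbar.comp T) (fhat - fdag) = pbar (T fhat - T fdag) := by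
    simp [ContinuousLinearMap.comp_apply, map_sub]
  have hRd : R fdag - R fhat ≤ M * d := by
    have := hsub fhat
    rw [hcomp] at this
    linarith
  have h1 : 1 / q * a ^ q ≤ 1 / q * δ ^ q + K * (a + δ) := by
    have hm := hmin fdag
    have key : ∀ x : ℝ, α * (1 / α * x) = x := fun x => by
      field_simp
    have hm2 : 1 / q * a ^ q ≤ 1 / q * ‖T fdag - g‖ ^ q + α * (R fdag - R fhat) := by
      have h3 := mul_le_mul_of_nonneg_left hm hα.le
      rw [mul_add, mul_add, key, key] at h3
      nlinarith [h3]
    have h3 : α * (R fdag - R fhat) ≤ α * (M * d) :=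
      mul_le_mul_of_nonneg_left hRd hα.le
    have h4 : K * d ≤ K * (a + δ) := mul_le_mul_of_nonneg_left hd hK0
    have h5 : 1 / q * ‖T fdag - g‖ ^ q ≤ 1 / q * δ ^ q :=
      mul_le_mul_of_nonneg_left hDq hinvq0.le
    have h6 : α * (M * d) = K * d := by rw [hK]; ring
    linarith
  -- bound on M via p = 0
  have hpw : pbar (T ωbar) ≤ M * W := by
    have h1 := pbar.le_opNorm (T ωbar)
    have h2 : |pbar (T ωbar)| ≤ M * W := by simpa [Real.norm_eq_abs] using h1
    linarith [le_abs_self (pbar (T ωbar))]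
  have hMqs : M ^ qs ≤ qs * (M * W) := by
    have h0 := hSsub 0
    simp only [norm_zero, zero_sub, ContinuousLinearMap.neg_apply] at h0
    rw [Real.zero_rpow (ne_of_gt hqs0)] at h0
    have h1 : 1 / qs * M ^ qs ≤ pbar (T ωbar) := by linarith
    have h2 := mul_le_mul_of_nonneg_left (le_trans h1 hpw) hqs0.le
    have hqs' : qs ≠ 0 := ne_of_gt hqs0
    calc M ^ qs = qs * (1 / qs * M ^ qs) := by field_simp
      _ ≤ qs * (M * W) := by
          exact mul_le_mul_of_nonneg_left (le_trans h1 hpw) hqs0.le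
  have hMq1 : M ^ (qs - 1) ≤ qs * W := by
    rcases eq_or_lt_of_le hM0 with hMz | hMp
    · rw [← hMz, Real.zero_rpow (by linarith : qs - 1 ≠ 0)]
      positivity
    · have hmm : M ^ (qs - 1) * M = M ^ qs := by
        rw [← Real.rpow_add_one (ne_of_gt hMp)]
        norm_num
      have : M ^ (qs - 1) * M ≤ (qs * W) * M := by
        rw [hmm]; linarith [hMqs]
      exact le_of_mul_le_mul_right this hMp
  have hKB : K ^ (qs - 1) ≤ qs * B := by
    have h1 : K ^ (qs - 1) = α ^ (qs - 1) * M ^ (qs - 1) :=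
      Real.mul_rpow hα.le hM0
    rw [h1, hB]
    have := mul_le_mul_of_nonneg_left hMq1 (Real.rpow_nonneg hα.le (qs - 1))
    nlinarith [this]
  -- case split
  have hcases : a ≤ 2 * δ ∨ a ≤ (8 * q * K) ^ (qs - 1) := by
    by_contra hcon
    push_neg at hcon
    obtain ⟨hc1, hc2⟩ := hcon
    have ha0' : 0 < a := lt_of_le_of_lt (Real.rpow_nonneg (by positivity) _) hc2
    have hAq : 0 < a ^ q := Real.rpow_pos_of_pos ha0' q
    -- δ^q ≤ a^q / 2
    have hdq : δ ^ q ≤ a ^ q / 2 := by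
      have h1 : δ ^ q ≤ (a / 2) ^ q :=
        Real.rpow_le_rpow hδ (by linarith) hq0.le
      have h2 : (a / 2) ^ q = a ^ q / 2 ^ q :=
        Real.div_rpow ha0 (by norm_num : (0:ℝ) ≤ 2) q
      have h3 : (2:ℝ) ≤ 2 ^ q := by
        calc (2:ℝ) = 2 ^ (1:ℝ) := by rw [Real.rpow_one]
          _ ≤ 2 ^ q := Real.rpow_le_rpow_of_exponent_le one_le_two hq.le
      have h4 : a ^ q / 2 ^ q ≤ a ^ q / 2 :=
        div_le_div_of_nonneg_left hAq.le (by norm_num) h3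
      linarith
    -- K bound
    have hK8 : 8 * q * K < a ^ (q - 1) := by
      have h1 := Real.rpow_lt_rpow (Real.rpow_nonneg (by positivity) _) hc2
        (by linarith : (0:ℝ) < q - 1)
      rwa [← Real.rpow_mul (by positivity), hprod, Real.rpow_one] at h1
    have haq : a * a ^ (q - 1) = a ^ q := by
      rw [mul_comm, ← Real.rpow_add_one (ne_of_gt ha0')]
      norm_num
    have hstep : K * (a + δ) ≤ a ^ q / (4 * q) := by
      have hKle : K ≤ a ^ (q - 1) / (8 * q) := by
        rw [le_div_iff₀ (by positivity)]
        nlinarith [hK8]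
      calc K * (a + δ) ≤ K * (2 * a) := by
            apply mul_le_mul_of_nonneg_left _ hK0; linarith
        _ ≤ (a ^ (q - 1) / (8 * q)) * (2 * a) := by
            apply mul_le_mul_of_nonneg_right hKle (by linarith)
        _ = a ^ q / (4 * q) := by rw [← haq]; ring
    have hfin : 1 / q * a ^ q ≤ 1 / q * (a ^ q / 2) + a ^ q / (4 * q) := by
      have := mul_le_mul_of_nonneg_left hdq hinvq0.le
      linarith
    have heq : a ^ q / (4 * q) = 1 / q * (a ^ q / 4) := by ring
    linarith [mul_pos hinvq0 hAq, hfin, heq]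
  rcases hcases with hc | hc
  · -- d ≤ 3δ
    have : d ≤ 3 * δ := by linarith
    nlinarith [mul_nonneg (mul_nonneg hE0 hqs0.le) (add_nonneg hδ hB0)]
  · have h1 : (8 * q * K) ^ (qs - 1) = E * K ^ (qs - 1) := by
      rw [hE, ← Real.mul_rpow (by positivity) hK0]
    have h2 : d ≤ δ + E * (qs * B) := by
      have := mul_le_mul_of_nonneg_left hKB hE0
      rw [h1] at hc
      linarith
    nlinarith [mul_nonneg (mul_nonneg hE0 hqs0.le) hδ,
      mul_nonneg (mul_nonneg hE0 hqs0.le) hB0, hB0, hδ]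
end

section
/- Let X, Y be real normed spaces, T : X → Y bounded linear, 1 < q ≤ 2 ≤ r, q* the conjugate of q, S(y) := (1/q)‖y‖^q, S*(p) := (1/q*)‖p‖^{q*}. Assume the Xu–Roach inequalities: there is c_S > 0 with S(y₁) − S(y₂) − η(y₁ − y₂) ≥ c_S · max(‖y₂‖, ‖y₁ − y₂‖)^{q−r} ‖y₁ − y₂‖^r for all y₁, y₂ ∈ Y and η ∈ ∂S(y₂), and there is c* > 0 with S*(p₁) − S*(p₂) − (p₁ − p₂)(G) ≥ c* ‖p₁ − p₂‖^{q*} for all p₁, p₂ ∈ Y* and G ∈ Y with G ∈ ∂S*(p₂). Let c > 0. Then there exist constants C, C̃ > 0, depending only on q, r, c, c_S, c*, such that the following holds. Let R : X → ℝ be convex; f† ∈ X; p̄ ∈ Y* with p̄ ∘ T ∈ ∂R(f†); ω̄ ∈ X with T ω̄ ∈ ∂S*(p̄); Φ an index function; β ≥ 0, μ > 1, t̄ > 0; and ξ_t ∈ X* for t ∈ (0, t̄] with ξ_t ∈ ∂R(f† − t ω̄) satisfying the third-order variational source condition: for all f ∈ X, t ∈ (0, t̄]: (ξ_t − p̄ ∘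 T)(f† − t ω̄ − f) ≤ D_R^{ξ_t}(f, f† − t ω̄) + t² Φ(t^{−q} ‖T f − T f† + t T ω̄‖^q) + β t^{2μ}. Let δ > 0 and α > 0 satisfy δ ≤ c α^{q*−1} and α^{q*−1} ≤ t̄; let g ∈ Y with ‖g − T f†‖ ≤ δ; let f̂ ∈ X minimize h ↦ (1/α)S(Th − g) + R(h); let p̂ ∈ Y* satisfy p̂ ∘ T ∈ ∂R(f̂) and −α p̂ ∈ ∂S(T f̂ − g). Then for every M ∈ ℝ satisfying −C̃ (c + ‖T ω̄‖)^{q−r} α^{−(q*−1)} τ + Φ(τ^{q/r}) ≤ M for all τ ≥ 0, one has (1/(2α)) [ S*(−α p̂) − S*(−α p̄) + α^{q*} (p̄ − p̂)(T ω̄) ] ≤ C δ^q/α + α^{2(q*−1)} M + β α^{2μ(q*−1)}. -/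
/-!
For `S = ‖·‖^q / q` and `S* = ‖·‖^{q*} / q*`, both `p ∈ ∂S(y)` and `y ∈ ∂S*(p)` amount to equality
`p y = S y + S* p` in the Fenchel–Young inequality. Hence `−α p̂` is dual to `T f̂ − g` and, with
`t = α^{q*−1}` (so that `t^{q−1} = α`), `−α p̄` is dual to `−t T ω̄`; for such pairs the two Bregman
distances add up to a pairing:

  `D_{S*}(−α p̂, −α p̄) + D_S(T f̂ − g, −t T ω̄)`
  `  = α (p̄ − p̂)(T f̂ − T(f† − t ω̄)) + α (p̄ − p̂)(T f† − g)`.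

The first Bregman distance is the bracket of the claim. The first pairing is bounded by the source
condition at `t`, where `ξ_t` cancels against `p̂ ∘ T ∈ ∂R(f̂)`; the second by Young's inequality,
absorbing half of `D_{S*}` through the Xu–Roach estimate for `S*`. The hypothesis on `M`, taken at
`τ = (‖T f̂ − T f† + t T ω̄‖ / t)^r`, trades the `Φ`-term for a multiple of
`‖T f̂ − T f† + t T ω̄‖^r`, which the Xu–Roach estimate for `S` absorbs into `D_S`: the `max` in
that estimate is of order `(c + ‖T ω̄‖) t` by the a priori bound on `‖T f̂ − g‖` coming from the
minimality of `f̂`.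
-/

open Real NormedSpace

section NormPow

variable {E : Type*} [NormedAddCommGroup E] [NormedSpace ℝ E]

def IsSubgradient (F : E → ℝ) (x : E) (ξ : StrongDual ℝ E) : Prop :=
  ∀ h, F x + ξ (h - x) ≤ F h

noncomputable def bregmanDist (F : E → ℝ) (ξ : StrongDual ℝ E) (x x₀ : E) : ℝ :=
  F x - F x₀ - ξ (x - x₀)

-- `normPowDiv q` is `S`, and `normPowDiv q*` on the dual is `S*`; a subgradient `G ∈ E` of `S*` is
-- `inclusionInDoubleDual ℝ E G`.
noncomputable def normPowDiv (q : ℝ) (x : E) : ℝ := 1 / q * ‖x‖ ^ q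

def IsFenchelYoungEq (q p : ℝ) (y : E) (η : StrongDual ℝ E) : Prop :=
  η y = normPowDiv q y + normPowDiv p η

variable {q p : ℝ} {y : E} {η : StrongDual ℝ E}

theorem IsSubgradient.apply_self_eq_norm_rpow (hq : 1 < q)
    (hη : IsSubgradient (normPowDiv q) y η) : η y = ‖y‖ ^ q := by
  let φ : ℝ → ℝ := fun s => 1 / q * ((1 + s) ^ q * ‖y‖ ^ q) - s * η y
  have hmin : IsLocalMin φ 0 := by
    filter_upwards [Ioi_mem_nhds (neg_one_lt_zero : (-1 : ℝ) < 0)] with s hs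
    have hs' : (0 : ℝ) ≤ 1 + s := by linarith [Set.mem_Ioi.mp hs]
    have h := hη ((1 + s) • y)
    rw [normPowDiv, normPowDiv, norm_smul, norm_of_nonneg hs', mul_rpow hs' (norm_nonneg y),
      add_smul, one_smul, add_sub_cancel_left, map_smul, smul_eq_mul] at h
    simp only [φ, add_zero, one_rpow, one_mul, zero_mul, sub_zero]
    linarith
  have hφ : HasDerivAt φ (‖y‖ ^ q - η y) 0 := by
    have h1 : HasDerivAt (fun s : ℝ => 1 + s) 1 0 := (hasDerivAt_id 0).const_add 1
    refine (((h1.rpow_const (p := q) (Or.inl (by norm_num))).mul_const (‖y‖ ^ q)).const_mul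
      (1 / q) |>.sub ((hasDerivAt_id (0 : ℝ)).mul_const (η y))).congr_deriv ?_
    field_simp
    simp
  linarith [hmin.hasDerivAt_eq_zero hφ]

theorem IsSubgradient.norm_le_norm_rpow (hq : 1 < q)
    (hη : IsSubgradient (normPowDiv q) y η) : ‖η‖ ≤ ‖y‖ ^ (q - 1) := by
  suffices key : ∀ u : E, ‖u‖ = 1 → η u ≤ ‖y‖ ^ (q - 1) by
    refine ContinuousLinearMap.opNorm_le_of_unit_norm (by positivity) fun u hu => ?_
    have := key (-u) (by rwa [norm_neg])
    rw [map_neg] at this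
    exact abs_le.mpr ⟨by linarith, key u hu⟩
  intro u hu
  rcases le_or_gt (η u) 0 with hu0 | hu0
  · exact hu0.trans (by positivity)
  -- test the subgradient inequality at `s • u`, where `s ^ (q - 1) = η u`
  set s := η u ^ (q - 1)⁻¹
  have hs : 0 < s := rpow_pos_of_pos hu0 _
  have hsu : s ^ (q - 1) = η u := rpow_inv_rpow hu0.le (by linarith)
  have h := hη (s • u)
  rw [normPowDiv, normPowDiv, map_sub, map_smul, smul_eq_mul, norm_smul, hu, mul_one,
    norm_of_nonneg hs.le, hη.apply_self_eq_norm_rpow hq, ← hsu, ← rpow_one_add' hs.le (by linarith),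
    add_sub_cancel] at h
  have hsy : s ^ q ≤ ‖y‖ ^ q := by
    have : 0 < 1 - 1 / q := by rw [sub_pos, div_lt_one (by linarith)]; exact hq
    nlinarith
  rw [← hsu]
  exact rpow_le_rpow hs.le ((rpow_le_rpow_iff hs.le (norm_nonneg y) (by linarith)).mp hsy)
    (by linarith)

theorem apply_le_normPowDiv_add_normPowDiv (hpq : q.HolderConjugate p) (f : StrongDual ℝ E)
    (x : E) : f x ≤ normPowDiv q x + normPowDiv p f :=
  calc f x ≤ ‖x‖ * ‖f‖ := (le_abs_self _).trans (by rw [mul_comm]; exact f.le_opNorm x)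
    _ ≤ ‖x‖ ^ q / q + ‖f‖ ^ p / p := young_inequality_of_nonneg (norm_nonneg _) (norm_nonneg _) hpq
    _ = normPowDiv q x + normPowDiv p f := by simp only [normPowDiv]; ring

theorem IsSubgradient.isFenchelYoungEq (hpq : q.HolderConjugate p)
    (hη : IsSubgradient (normPowDiv q) y η) : IsFenchelYoungEq q p y η := by
  refine le_antisymm (apply_le_normPowDiv_add_normPowDiv hpq η y) ?_
  have hnorm : ‖η‖ ^ p ≤ ‖y‖ ^ q :=
    calc ‖η‖ ^ p ≤ (‖y‖ ^ (q - 1)) ^ p :=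
          rpow_le_rpow (norm_nonneg _) (hη.norm_le_norm_rpow hpq.lt) hpq.symm.nonneg
      _ = ‖y‖ ^ q := by rw [← rpow_mul (norm_nonneg _), hpq.sub_one_mul_conj]
  have := mul_le_mul_of_nonneg_left hnorm hpq.symm.one_div_nonneg
  have hsum : 1 / q * ‖y‖ ^ q + 1 / p * ‖y‖ ^ q = ‖y‖ ^ q := by
    rw [← add_mul, hpq.one_div_add_one_div, div_one, one_mul]
  rw [normPowDiv, normPowDiv, hη.apply_self_eq_norm_rpow hpq.lt]
  linarith

theorem IsFenchelYoungEq.isSubgradient (hpq : q.HolderConjugate p)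
    (h : IsFenchelYoungEq q p y η) : IsSubgradient (normPowDiv q) y η := fun z => by
  have := apply_le_normPowDiv_add_normPowDiv hpq η z
  rw [map_sub, IsFenchelYoungEq] at *
  linarith

theorem IsFenchelYoungEq.isSubgradient_dual (hpq : q.HolderConjugate p)
    (h : IsFenchelYoungEq q p y η) :
    IsSubgradient (normPowDiv p) η (inclusionInDoubleDual ℝ E y) := fun η' => by
  have := apply_le_normPowDiv_add_normPowDiv hpq η' y
  rw [IsFenchelYoungEq] at h
  rw [dual_def, sub_apply]
  linarith

theorem IsSubgradient.isFenchelYoungEq_of_dual (hpq : q.HolderConjugate p)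
    (h : IsSubgradient (normPowDiv p) η (inclusionInDoubleDual ℝ E y)) :
    IsFenchelYoungEq q p y η := by
  have hy : ‖inclusionInDoubleDual ℝ E y‖ = ‖y‖ := (inclusionInDoubleDualLi ℝ).norm_map y
  have := h.isFenchelYoungEq hpq.symm
  rw [IsFenchelYoungEq, dual_def, normPowDiv, normPowDiv, hy] at this
  rw [IsFenchelYoungEq, this, normPowDiv, normPowDiv, add_comm]

theorem IsFenchelYoungEq.smul (hpq : q.HolderConjugate p) (h : IsFenchelYoungEq q p y η)
    {s : ℝ} (hs : 0 ≤ s) : IsFenchelYoungEq q p (s • y) (s ^ (q - 1) • η) := by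
  have hsq : s ^ (q - 1) * s = s ^ q := by
    rw [← rpow_add_one' hs (by linarith [hpq.lt]), sub_add_cancel]
  rw [IsFenchelYoungEq, normPowDiv, normPowDiv] at *
  rw [smul_apply, map_smul, smul_eq_mul, smul_eq_mul, h, norm_smul,
    norm_smul, norm_of_nonneg hs, norm_of_nonneg (rpow_nonneg hs _), mul_rpow hs (norm_nonneg _),
    mul_rpow (rpow_nonneg hs _) (norm_nonneg _), ← rpow_mul hs, hpq.sub_one_mul_conj]
  linear_combination (1 / q * ‖y‖ ^ q + 1 / p * ‖η‖ ^ p) * hsq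

theorem IsFenchelYoungEq.neg (h : IsFenchelYoungEq q p y η) : IsFenchelYoungEq q p (-y) (-η) := by
  simpa [IsFenchelYoungEq, normPowDiv] using h

theorem IsFenchelYoungEq.bregmanDist_add_bregmanDist {y₁ y₂ : E} {η₁ η₂ : StrongDual ℝ E}
    (h₁ : IsFenchelYoungEq q p y₁ η₁) (h₂ : IsFenchelYoungEq q p y₂ η₂) :
    bregmanDist (normPowDiv p) (inclusionInDoubleDual ℝ E y₂) η₁ η₂
      + bregmanDist (normPowDiv q) η₂ y₁ y₂ = (η₁ - η₂) (y₁ - y₂) := by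
  simp only [IsFenchelYoungEq, bregmanDist, dual_def, map_sub, sub_apply] at *
  linarith

theorem IsFenchelYoungEq.bregmanDist_dual_le {c C A δ : ℝ} {y₁ y₂ v : E}
    {η₁ η₂ : StrongDual ℝ E}
    (h₁ : IsFenchelYoungEq q p y₁ η₁) (h₂ : IsFenchelYoungEq q p y₂ η₂)
    (hc : c * ‖η₁ - η₂‖ ^ p ≤ bregmanDist (normPowDiv p) (inclusionInDoubleDual ℝ E y₂) η₁ η₂)
    (hC : ∀ a b : ℝ, 0 ≤ a → 0 ≤ b → a * b ≤ c / 2 * a ^ p + C * b ^ q)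
    (hv : (η₁ - η₂) v ≤ A) (hδ : ‖y₁ - y₂ - v‖ ≤ δ) :
    bregmanDist (normPowDiv p) (inclusionInDoubleDual ℝ E y₂) η₁ η₂
      ≤ 2 * (A + C * δ ^ q - bregmanDist (normPowDiv q) η₂ y₁ y₂) := by
  have hsum := h₁.bregmanDist_add_bregmanDist h₂
  have hnoise : (η₁ - η₂) (y₁ - y₂ - v) ≤ c / 2 * ‖η₁ - η₂‖ ^ p + C * δ ^ q :=
    calc (η₁ - η₂) (y₁ - y₂ - v) ≤ ‖η₁ - η₂‖ * δ :=
          (le_abs_self _).trans <| ((η₁ - η₂).le_opNorm _).trans (by gcongr)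
      _ ≤ c / 2 * ‖η₁ - η₂‖ ^ p + C * δ ^ q := hC _ _ (norm_nonneg _) ((norm_nonneg _).trans hδ)
  rw [map_sub] at hnoise
  linarith

end NormPow

theorem exists_mul_le_mul_rpow_add_mul_rpow {p q ε : ℝ} (hpq : p.HolderConjugate q)
    (hε : 0 < ε) : ∃ C > 0, ∀ a b : ℝ, 0 ≤ a → 0 ≤ b → a * b ≤ ε * a ^ p + C * b ^ q := by
  have hpε : 0 < p * ε := mul_pos hpq.pos hε
  set k := (p * ε) ^ p⁻¹
  have hk : 0 < k := rpow_pos_of_pos hpε _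
  refine ⟨1 / (q * k ^ q), by have := hpq.symm.pos; positivity, fun a b ha hb => ?_⟩
  have h := young_inequality_of_nonneg (mul_nonneg hk.le ha) (div_nonneg hb hk.le) hpq
  rw [mul_rpow hk.le ha, div_rpow hb hk.le, rpow_inv_rpow hpε.le hpq.ne_zero] at h
  have hp : p ≠ 0 := hpq.ne_zero
  calc a * b = k * a * (b / k) := by field_simp
    _ ≤ p * ε * a ^ p / p + b ^ q / k ^ q / q := h
    _ = ε * a ^ p + 1 / (q * k ^ q) * b ^ q := by field_simp

theorem exists_le_mul_of_rpow_le_add {q : ℝ} (hq : 1 < q) :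
    ∃ C, 0 ≤ C ∧ ∀ s b δ L : ℝ, 0 ≤ s → 0 < b → 0 ≤ δ → δ ≤ b → L ≤ b ^ (q - 1) →
      1 / q * s ^ q ≤ 1 / q * δ ^ q + L * (δ + s) → s ≤ C * b := by
  have hq1 : q - 1 ≠ 0 := by linarith
  have hC : 1 ≤ (1 + 2 * q) ^ (q - 1)⁻¹ :=
    one_le_rpow (by linarith) (inv_nonneg.mpr (by linarith))
  refine ⟨(1 + 2 * q) ^ (q - 1)⁻¹, by positivity, fun s b δ L hs hb hδ hδb hL h => ?_⟩
  rcases le_or_gt s b with hsb | hbs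
  · nlinarith
  have hs0 : 0 < s := hb.trans hbs
  have hpow : ∀ x : ℝ, 0 ≤ x → x ^ q = x ^ (q - 1) * x := fun x hx => by
    rw [← rpow_add_one' hx (by linarith), sub_add_cancel]
  have key : s ^ (q - 1) * s ≤ (1 + 2 * q) * b ^ (q - 1) * s := by
    have hδq : δ ^ q ≤ b ^ q := rpow_le_rpow hδ hδb (by linarith)
    have hLq : q * (L * (δ + s)) ≤ q * (b ^ (q - 1) * (2 * s)) :=
      mul_le_mul_of_nonneg_left (mul_le_mul hL (by linarith) (by positivity) (by positivity))
        (by linarith)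
    have hb' : b ^ (q - 1) * b ≤ b ^ (q - 1) * s := by gcongr
    have hq' := mul_le_mul_of_nonneg_left h (by linarith : (0 : ℝ) ≤ q)
    rw [mul_add, ← mul_assoc, ← mul_assoc, mul_one_div_cancel (by linarith), one_mul, one_mul,
      hpow s hs] at hq'
    rw [hpow b hb.le] at hδq
    linarith
  calc s = (s ^ (q - 1)) ^ (q - 1)⁻¹ := (rpow_rpow_inv hs hq1).symm
    _ ≤ ((1 + 2 * q) * b ^ (q - 1)) ^ (q - 1)⁻¹ :=
      rpow_le_rpow (by positivity) (le_of_mul_le_mul_right key hs0) (by positivity)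
    _ = (1 + 2 * q) ^ (q - 1)⁻¹ * b := by
      rw [mul_rpow (by linarith) (by positivity), rpow_rpow_inv hb.le hq1]

theorem rpow_mul_rpow_le_of_le_add {q r A b w δ v : ℝ} (hq : 0 < q) (hqr : q ≤ r) (hA : 1 ≤ A)
    (hb : 0 < b) (hw : 0 ≤ w) (hδ : 0 ≤ δ) (hδb : δ ≤ b) (hv : 0 ≤ v) (hvw : v ≤ w + δ) :
    A ^ (q - r) / 2 ^ r * b ^ (q - r) * v ^ r ≤ (A * b) ^ (q - r) * w ^ r + δ ^ q := by
  have hr : 0 < r := hq.trans_le hqr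
  have hv2 : v ^ r ≤ 2 ^ r * (w ^ r + δ ^ r) :=
    calc v ^ r ≤ (2 * max w δ) ^ r :=
          rpow_le_rpow hv (by linarith [le_max_left w δ, le_max_right w δ]) hr.le
      _ = 2 ^ r * max w δ ^ r := mul_rpow (by norm_num) (le_max_of_le_left hw)
      _ ≤ 2 ^ r * (w ^ r + δ ^ r) := by
        gcongr
        rcases max_cases w δ with ⟨h, -⟩ | ⟨h, -⟩ <;> rw [h] <;>
          linarith [rpow_nonneg hw r, rpow_nonneg hδ r]
  have hA1 : A ^ (q - r) ≤ 1 := rpow_le_one_of_one_le_of_nonpos hA (by linarith)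
  have hδr : b ^ (q - r) * δ ^ r ≤ δ ^ q :=
    calc b ^ (q - r) * δ ^ r = b ^ (q - r) * δ ^ (r - q) * δ ^ q := by
          rw [mul_assoc, ← rpow_add' hδ (by linarith), sub_add_cancel]
      _ ≤ b ^ (q - r) * b ^ (r - q) * δ ^ q := by gcongr
      _ = δ ^ q := by rw [← rpow_add hb, show q - r + (r - q) = 0 by ring, rpow_zero, one_mul]
  calc A ^ (q - r) / 2 ^ r * b ^ (q - r) * v ^ r
      ≤ A ^ (q - r) / 2 ^ r * b ^ (q - r) * (2 ^ r * (w ^ r + δ ^ r)) := by gcongr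
    _ = (A * b) ^ (q - r) * w ^ r + A ^ (q - r) * (b ^ (q - r) * δ ^ r) := by
      rw [mul_rpow (by linarith) hb.le]
      field_simp
    _ ≤ (A * b) ^ (q - r) * w ^ r + δ ^ q := by
      have := mul_le_mul hA1 hδr (by positivity) zero_le_one
      linarith

theorem rpow_mul_norm_rpow_le_of_xuRoach {Y : Type*} [NormedAddCommGroup Y] {q r cS Cq b δ D : ℝ}
    {y₁ y₂ v : Y} (hq : 0 < q) (hqr : q ≤ r) (hcS : 0 < cS) (hCq : 0 ≤ Cq) (hb : 0 < b)
    (hy₁ : ‖y₁‖ ≤ Cq * b) (hy₂ : ‖y₂‖ ≤ b) (hδ : ‖y₁ - y₂ - v‖ ≤ δ) (hδb : δ ≤ b)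
    (hXR : cS * max ‖y₂‖ ‖y₁ - y₂‖ ^ (q - r) * ‖y₁ - y₂‖ ^ r ≤ D) :
    cS * (Cq + 1) ^ (q - r) / 2 ^ r * b ^ (q - r) * ‖v‖ ^ r ≤ D + cS * δ ^ q := by
  have hr : 0 < r := hq.trans_le hqr
  have hD : cS * ((Cq + 1) * b) ^ (q - r) * ‖y₁ - y₂‖ ^ r ≤ D := by
    rcases (norm_nonneg (y₁ - y₂)).eq_or_lt with hw | hw
    · rw [← hw, zero_rpow hr.ne', mul_zero] at hXR ⊢
      exact hXR
    refine le_trans (mul_le_mul_of_nonneg_right (mul_le_mul_of_nonneg_left ?_ hcS.le)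
      (by positivity)) hXR
    refine rpow_le_rpow_of_nonpos (hw.trans_le (le_max_right _ _)) (max_le ?_ ?_) (by linarith)
    · nlinarith
    · calc ‖y₁ - y₂‖ ≤ ‖y₁‖ + ‖y₂‖ := norm_sub_le _ _
        _ ≤ (Cq + 1) * b := by linarith
  have hv : ‖v‖ ≤ ‖y₁ - y₂‖ + δ :=
    calc ‖v‖ = ‖(y₁ - y₂) - (y₁ - y₂ - v)‖ := by rw [sub_sub_cancel]
      _ ≤ ‖y₁ - y₂‖ + δ := (norm_sub_le _ _).trans (by gcongr)
  have := rpow_mul_rpow_le_of_le_add (A := Cq + 1) hq hqr (by linarith) hb (norm_nonneg _)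
    ((norm_nonneg _).trans hδ) hδb (norm_nonneg v) hv
  calc cS * (Cq + 1) ^ (q - r) / 2 ^ r * b ^ (q - r) * ‖v‖ ^ r
      = cS * ((Cq + 1) ^ (q - r) / 2 ^ r * b ^ (q - r) * ‖v‖ ^ r) := by ring
    _ ≤ cS * (((Cq + 1) * b) ^ (q - r) * ‖y₁ - y₂‖ ^ r + δ ^ q) := by gcongr
    _ ≤ D + cS * δ ^ q := by linarith

section Tikhonov

variable {X Y : Type*} [NormedAddCommGroup X] [NormedSpace ℝ X] [NormedAddCommGroup Y]
  [NormedSpace ℝ Y] {R : X → ℝ} {T : X →L[ℝ] Y}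

theorem tikhonov_norm_rpow_le {g : Y} {f₀ f : X} {p : StrongDual ℝ Y} {q α δ : ℝ}
    (hq : 0 < q) (hα : 0 < α)
    (hmin : ∀ h, 1 / α * normPowDiv q (T f - g) + R f ≤ 1 / α * normPowDiv q (T h - g) + R h)
    (hp : IsSubgradient R f₀ (p.comp T)) (hg : ‖g - T f₀‖ ≤ δ) :
    1 / q * ‖T f - g‖ ^ q ≤ 1 / q * δ ^ q + α * ‖p‖ * (δ + ‖T f - g‖) := by
  have hR : R f₀ - R f ≤ ‖p‖ * (δ + ‖T f - g‖) := by
    have hsub := hp f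
    have hTf : ‖T f₀ - T f‖ ≤ δ + ‖T f - g‖ :=
      calc ‖T f₀ - T f‖ = ‖(g - T f₀) + (T f - g)‖ := by rw [← norm_neg]; congr 1; abel
        _ ≤ δ + ‖T f - g‖ := (norm_add_le _ _).trans (by gcongr)
    have hpT := (le_abs_self _).trans ((p.le_opNorm (T f₀ - T f)).trans
      (mul_le_mul_of_nonneg_left hTf (norm_nonneg p)))
    simp only [ContinuousLinearMap.comp_apply, map_sub] at hsub hpT
    linarith
  have hg' : 1 / q * ‖T f₀ - g‖ ^ q ≤ 1 / q * δ ^ q := by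
    rw [norm_sub_rev] at hg
    gcongr
  have h : 1 / α * (1 / q * ‖T f - g‖ ^ q - 1 / q * ‖T f₀ - g‖ ^ q) ≤ R f₀ - R f := by
    have := hmin f₀
    simp only [normPowDiv] at this
    linarith
  rw [one_div_mul_eq_div, div_le_iff₀ hα] at h
  linarith [mul_le_mul_of_nonneg_right hR hα.le]

theorem IsSubgradient.sub_apply_le_of_source_condition {u f : X} {ξ : StrongDual ℝ X}
    {p₀ p : StrongDual ℝ Y} {ε : ℝ} (hp : IsSubgradient R f (p.comp T))
    (hvsc : (ξ - p₀.comp T) (u - f) ≤ bregmanDist R ξ f u + ε) :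
    (p₀ - p) (T f - T u) ≤ ε := by
  have := hp u
  simp only [bregmanDist, sub_apply, ContinuousLinearMap.comp_apply, map_sub] at *
  linarith

theorem IsFenchelYoungEq.bregmanDist_dual_le_of_source_condition {g y₀ v : Y} {f u : X}
    {ξ : StrongDual ℝ X} {p₀ p : StrongDual ℝ Y} {q qs c C α δ ε : ℝ}
    (hf : IsFenchelYoungEq q qs (T f - g) ((-α) • p))
    (h₀ : IsFenchelYoungEq q qs y₀ ((-α) • p₀))
    (hc : c * ‖(-α) • p - (-α) • p₀‖ ^ qs ≤
      bregmanDist (normPowDiv qs) (inclusionInDoubleDual ℝ Y y₀) ((-α) • p) ((-α) • p₀))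
    (hC : ∀ a b : ℝ, 0 ≤ a → 0 ≤ b → a * b ≤ c / 2 * a ^ qs + C * b ^ q) (hα : 0 ≤ α)
    (hp : IsSubgradient R f (p.comp T))
    (hvsc : (ξ - p₀.comp T) (u - f) ≤ bregmanDist R ξ f u + ε)
    (hv : T f - T u = v) (hδ : ‖T f - g - y₀ - v‖ ≤ δ) :
    bregmanDist (normPowDiv qs) (inclusionInDoubleDual ℝ Y y₀) ((-α) • p) ((-α) • p₀)
      ≤ 2 * (α * ε + C * δ ^ q - bregmanDist (normPowDiv q) ((-α) • p₀) (T f - g) y₀) := by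
  refine hf.bregmanDist_dual_le h₀ hc hC ?_ hδ
  have h := mul_le_mul_of_nonneg_left (hv ▸ hp.sub_apply_le_of_source_condition hvsc) hα
  simp only [sub_apply, smul_apply, smul_eq_mul] at h ⊢
  linarith

end Tikhonov

theorem mul_sq_mul_apply_le_of_forall_le {Φ : ℝ → ℝ} {q qs r α C K M v : ℝ}
    (hpq : q.HolderConjugate qs) (hr : 0 < r) (hα : 0 < α) (hK : 0 ≤ K) (hv : 0 ≤ v)
    (hM : ∀ τ, 0 ≤ τ → -C * K ^ (q - r) * α ^ (-(qs - 1)) * τ + Φ (τ ^ (q / r)) ≤ M) :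
    α * ((α ^ (qs - 1)) ^ 2 * Φ ((α ^ (qs - 1)) ^ (-q) * v ^ q))
      ≤ α * ((α ^ (qs - 1)) ^ 2 * M) + C * (K * α ^ (qs - 1)) ^ (q - r) * v ^ r := by
  set t := α ^ (qs - 1) with ht_def
  have ht : 0 < t := rpow_pos_of_pos hα _
  have hαt : α = t ^ (q - 1) := by
    rw [ht_def, ← rpow_mul hα.le, show (qs - 1) * (q - 1) = 1 by
      linear_combination hpq.mul_eq_add, rpow_one]
  -- evaluate the hypothesis at `τ = (v / t) ^ r`, for which `τ ^ (q / r) = t ^ (-q) * v ^ q`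
  have h := hM ((v / t) ^ r) (by positivity)
  rw [← rpow_mul (div_nonneg hv ht.le), mul_div_cancel₀ _ hr.ne', div_rpow hv ht.le r,
    div_rpow hv ht.le q, rpow_neg hα.le, ← ht_def] at h
  have hpow : α * t ^ 2 * t⁻¹ * (v ^ r / t ^ r) = t ^ (q - r) * v ^ r := by
    have e : t ^ (q - r) * t ^ r = α * t := by
      rw [hαt, ← rpow_add ht, ← rpow_add_one ht.ne']
      congr 1
      ring
    field_simp
    linear_combination -(v ^ r) * e
  calc α * (t ^ 2 * Φ (t ^ (-q) * v ^ q))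
      ≤ α * (t ^ 2 * (M + C * K ^ (q - r) * t⁻¹ * (v ^ r / t ^ r))) := by
        rw [rpow_neg ht.le, inv_mul_eq_div]
        gcongr
        linarith
    _ = α * (t ^ 2 * M) + C * K ^ (q - r) * (α * t ^ 2 * t⁻¹ * (v ^ r / t ^ r)) := by ring
    _ = α * (t ^ 2 * M) + C * (K * t) ^ (q - r) * v ^ r := by
        rw [hpow, mul_rpow hK ht.le]
        ring

theorem rate_bound_of_estimates {Φ : ℝ → ℝ} {q qs r α β μ C₁ cS C K M δ D Dstar v : ℝ}
    (hpq : q.HolderConjugate qs) (hr : 0 < r) (hα : 0 < α) (hK : 0 ≤ K) (hv : 0 ≤ v)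
    (hM : ∀ τ, 0 ≤ τ → -C * K ^ (q - r) * α ^ (-(qs - 1)) * τ + Φ (τ ^ (q / r)) ≤ M)
    (hdual : Dstar ≤ 2 * (α * ((α ^ (qs - 1)) ^ 2 * Φ ((α ^ (qs - 1)) ^ (-q) * v ^ q)
      + β * (α ^ (qs - 1)) ^ (2 * μ)) + C₁ * δ ^ q - D))
    (hprimal : C * (K * α ^ (qs - 1)) ^ (q - r) * v ^ r ≤ D + cS * δ ^ q) :
    1 / (2 * α) * Dstar
      ≤ (C₁ + cS) * δ ^ q / α + α ^ (2 * (qs - 1)) * M + β * α ^ (2 * μ * (qs - 1)) := by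
  have hΦ := mul_sq_mul_apply_le_of_forall_le hpq hr hα hK hv hM
  rw [show α ^ (2 * (qs - 1)) = (α ^ (qs - 1)) ^ 2 by rw [mul_comm, rpow_mul hα.le]; norm_cast,
    show α ^ (2 * μ * (qs - 1)) = (α ^ (qs - 1)) ^ (2 * μ) by rw [mul_comm, rpow_mul hα.le],
    one_div, inv_mul_le_iff₀ (by positivity)]
  have : (C₁ + cS) * δ ^ q / α * α = (C₁ + cS) * δ ^ q := div_mul_cancel₀ _ hα.ne'
  linarith

/-- Convergence rates for the dual problem (Lemma `dual_conv` of the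
paper) under the third order variational source condition `VSC³(f†, Φ, R, S)`:
`(1/(2α))[S*(−αp̂) − S*(−αp̄) + α^{q*}(p̄−p̂)(Tω̄)]
  ≤ C δ^q/α + α^{2(q*−1)} M + β α^{2μ(q*−1)}`. -/
theorem stmt_10 {X Y : Type*} [NormedAddCommGroup X] [NormedSpace ℝ X]
    [NormedAddCommGroup Y] [NormedSpace ℝ Y]
    (T : X →L[ℝ] Y) (q r qs : ℝ) (hq : 1 < q) (hq2 : q ≤ 2) (hr : 2 ≤ r)
    (hqs : 1 / q + 1 / qs = 1)
    -- Xu–Roach inequality for S = (1/q)‖·‖^q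
    (cS : ℝ) (hcS : 0 < cS)
    (hXRS : ∀ (y₁ y₂ : Y) (η : Y →L[ℝ] ℝ),
      (∀ h : Y, 1 / q * ‖y₂‖ ^ q + η (h - y₂) ≤ 1 / q * ‖h‖ ^ q) →
      1 / q * ‖y₁‖ ^ q - 1 / q * ‖y₂‖ ^ q - η (y₁ - y₂)
        ≥ cS * (max ‖y₂‖ ‖y₁ - y₂‖) ^ (q - r) * ‖y₁ - y₂‖ ^ r)
    -- Xu–Roach inequality for S* = (1/q*)‖·‖^{q*}
    (cstar : ℝ) (hcstar : 0 < cstar)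
    (hXRSstar : ∀ (p₁ p₂ : Y →L[ℝ] ℝ) (G : Y),
      (∀ p : Y →L[ℝ] ℝ, 1 / qs * ‖p₂‖ ^ qs + (p - p₂) G ≤ 1 / qs * ‖p‖ ^ qs) →
      1 / qs * ‖p₁‖ ^ qs - 1 / qs * ‖p₂‖ ^ qs - (p₁ - p₂) G ≥ cstar * ‖p₁ - p₂‖ ^ qs)
    (c : ℝ) (hc : 0 < c) :
    ∃ C Ctld : ℝ, 0 < C ∧ 0 < Ctld ∧
      ∀ R : X → ℝ, ConvexOn ℝ Set.univ R →
      ∀ (fdag : X) (pbar : Y →L[ℝ] ℝ),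
        (∀ h : X, R fdag + (pbar.comp T) (h - fdag) ≤ R h) →
      ∀ ωbar : X,
        (∀ p : Y →L[ℝ] ℝ,
          1 / qs * ‖pbar‖ ^ qs + (p - pbar) (T ωbar) ≤ 1 / qs * ‖p‖ ^ qs) →
      ∀ Φ : ℝ → ℝ, ContinuousOn Φ (Set.Ici 0) → MonotoneOn Φ (Set.Ici 0) →
        Φ 0 = 0 → (∀ t : ℝ, 0 ≤ t → 0 ≤ Φ t) →
      ∀ β μ tbar : ℝ, 0 ≤ β → 1 < μ → 0 < tbar →
      ∀ ξ : ℝ → (X →L[ℝ] ℝ),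
        (∀ t ∈ Set.Ioc (0 : ℝ) tbar, ∀ h : X,
          R (fdag - t • ωbar) + (ξ t) (h - (fdag - t • ωbar)) ≤ R h) →
        -- third order variational source condition
        (∀ f : X, ∀ t ∈ Set.Ioc (0 : ℝ) tbar,
          (ξ t - pbar.comp T) (fdag - t • ωbar - f)
            ≤ R f - R (fdag - t • ωbar) - (ξ t) (f - (fdag - t • ωbar))
              + t ^ 2 * Φ (t ^ (-q) * ‖T f - T fdag + t • T ωbar‖ ^ q)
              + β * t ^ (2 * μ)) →
      ∀ δ α : ℝ, 0 < δ → 0 < α → δ ≤ c * α ^ (qs - 1) → α ^ (qs - 1) ≤ tbar →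
      ∀ g : Y, ‖g - T fdag‖ ≤ δ →
      ∀ fhat : X,
        (∀ h : X, 1 / α * (1 / q * ‖T fhat - g‖ ^ q) + R fhat
          ≤ 1 / α * (1 / q * ‖T h - g‖ ^ q) + R h) →
      ∀ phat : Y →L[ℝ] ℝ,
        (∀ h : X, R fhat + (phat.comp T) (h - fhat) ≤ R h) →
        (∀ y : Y, 1 / q * ‖T fhat - g‖ ^ q + ((-α) • phat) (y - (T fhat - g))
          ≤ 1 / q * ‖y‖ ^ q) →
      ∀ M : ℝ,
        (∀ τ : ℝ, 0 ≤ τ →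
          -Ctld * (c + ‖T ωbar‖) ^ (q - r) * α ^ (-(qs - 1)) * τ + Φ (τ ^ (q / r))
            ≤ M) →
        1 / (2 * α) * (1 / qs * ‖(-α) • phat‖ ^ qs - 1 / qs * ‖(-α) • pbar‖ ^ qs
            + α ^ qs * ((pbar - phat) (T ωbar)))
          ≤ C * δ ^ q / α + α ^ (2 * (qs - 1)) * M + β * α ^ (2 * μ * (qs - 1)) := by
  have hpq : q.HolderConjugate qs :=
    holderConjugate_iff.mpr ⟨hq, by simpa only [one_div] using hqs⟩
  obtain ⟨C₁, hC₁, hYoung⟩ := exists_mul_le_mul_rpow_add_mul_rpow hpq.symm (half_pos hcstar)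
  obtain ⟨Cq, hCq, hApriori⟩ := exists_le_mul_of_rpow_le_add hq
  refine ⟨C₁ + cS, cS * (Cq + 1) ^ (q - r) / 2 ^ r, by positivity, by positivity, ?_⟩
  intro R _ fdag pbar hpbar ωbar hωbar Φ _ _ _ _ β μ tbar _ _ _ ξ _ hVSC δ α hδ hα hδle htle g hg
    fhat hmin phat hphatR hphatS M hM
  set t := α ^ (qs - 1) with ht_def
  set K := c + ‖T ωbar‖
  have ht : 0 < t := rpow_pos_of_pos hα _
  have hαt : t ^ (q - 1) = α := by
    rw [ht_def, ← rpow_mul hα.le, show (qs - 1) * (q - 1) = 1 by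
      linear_combination hpq.mul_eq_add, rpow_one]
  have hbar := IsSubgradient.isFenchelYoungEq_of_dual hpq hωbar
  have hGbar : IsFenchelYoungEq q qs ((-t) • T ωbar) ((-α) • pbar) := by
    have e : (-α) • pbar = -(t ^ (q - 1) • pbar) := by rw [hαt]; exact neg_smul α pbar
    rw [neg_smul, e]
    exact (hbar.smul hpq ht.le).neg
  have hhat := IsSubgradient.isFenchelYoungEq hpq hphatS
  have hδb : δ ≤ K * t := hδle.trans (by gcongr; linarith [norm_nonneg (T ωbar)])
  have hGn : ‖(-t) • T ωbar‖ ≤ K * t := by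
    rw [norm_smul, norm_neg, norm_of_nonneg ht.le, mul_comm]
    gcongr
    linarith
  have hpbar_le : α * ‖pbar‖ ≤ (K * t) ^ (q - 1) := by
    rw [mul_rpow (by positivity) ht.le, hαt, mul_comm α]
    gcongr
    exact ((hbar.isSubgradient hpq).norm_le_norm_rpow hq).trans (by gcongr; linarith)
  have hyhat := hApriori _ _ _ _ (norm_nonneg _) (by positivity) hδ.le hδb hpbar_le
    (tikhonov_norm_rpow_le (by linarith) hα hmin hpbar hg)
  set v := T fhat - T fdag + t • T ωbar with hv_def
  have hnoise : ‖T fhat - g - (-t) • T ωbar - v‖ ≤ δ := by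
    rw [show T fhat - g - (-t) • T ωbar - v = -(g - T fdag) by simp only [hv_def, neg_smul]; abel,
      norm_neg]
    exact hg
  have hdual := hhat.bregmanDist_dual_le_of_source_condition hGbar
    (hXRSstar _ _ _ (hGbar.isSubgradient_dual hpq)) hYoung hα.le hphatR
    ((hVSC fhat t ⟨ht, htle⟩).trans_eq (add_assoc _ _ _))
    (by simp only [hv_def, map_sub, map_smul]; abel) hnoise
  have hprimal := rpow_mul_norm_rpow_le_of_xuRoach
    (D := bregmanDist (normPowDiv q) ((-α) • pbar) (T fhat - g) ((-t) • T ωbar)) (by linarith)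
    (by linarith) hcS hCq (by positivity) hyhat hGn hnoise hδb
    (hXRS _ _ _ (hGbar.isSubgradient hpq))
  have hbracket : 1 / qs * ‖(-α) • phat‖ ^ qs - 1 / qs * ‖(-α) • pbar‖ ^ qs
      + α ^ qs * ((pbar - phat) (T ωbar)) = bregmanDist (normPowDiv qs)
        (inclusionInDoubleDual ℝ Y ((-t) • T ωbar)) ((-α) • phat) ((-α) • pbar) := by
    rw [show α ^ qs = α * t by
      rw [ht_def, ← rpow_one_add' hα.le (by linarith [hpq.symm.lt]), add_sub_cancel]]
    simp only [bregmanDist, normPowDiv, dual_def, sub_apply, smul_apply, map_smul, smul_eq_mul]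
    ring
  rw [hbracket]
  exact rate_bound_of_estimates hpq (by linarith) hα (by positivity) (norm_nonneg v) hM hdual
    hprimal
end

section
/- Let X, Y be real normed spaces, T : X → Y bounded linear, q > 1, and R : X → ℝ convex. Let f† ∈ X, p̄ ∈ Y* with p̄ ∘ T ∈ ∂R(f†), ω̄ ∈ X, 0 < t̄ ≤ 1, and for each t ∈ (0, t̄] let ξ_t ∈ X* with ξ_t ∈ ∂R(f† − t ω̄). Assume: (a) there exist C_ω ≥ 0 and ω* ∈ X* such that ‖(p̄ ∘ T) − ξ_t − t ω*‖_{X*} ≤ C_ω t² for all t ∈ (0, t̄]; (b) there exist μ > 1 and C_μ > 0 such that R(f₁) − R(f₂) − ξ(f₁ − f₂) ≥ C_μ ‖f₁ − f₂‖^μ for all f₁, f₂ ∈ X and all ξ ∈ ∂R(f₂); (c) ω* = p̄⁽²⁾ ∘ T for some p̄⁽²⁾ ∈ Y*. Then there exists β ≥ 0 such that, with μ* the conjugate exponent of μ, for all f ∈ X and all t ∈ (0, t̄]: (ξ_t − p̄ ∘ T)(f† − t ω̄ − f) ≤ D_R^{ξ_t}(f, f† − t ω̄) + t² ‖p̄⁽²⁾‖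 · ( t^{−q} ‖T f − T f† + t T ω̄‖^q )^{1/q} + β t^{2μ*}. -/
/-!
Write `g = f† − t ω̄`. Assumption (a) lets us replace `ξ_t − p̄ ∘ T` by `−t ω*` up to a
functional of norm `C_ω t²`. The error term `C_ω t² ‖f − g‖` is absorbed by Young's inequality
into `C_μ ‖f − g‖^μ ≤ D_R^{ξ_t}(f, g)`, leaving `β t^{2μ*}`; the main term
`t ω*(f − g) = t p̄⁽²⁾(T (f − g))` is at most `t ‖p̄⁽²⁾‖ ‖T (f − g)‖`, which is exactly
`t² ‖p̄⁽²⁾‖ (t^{−q} ‖T (f − g)‖^q)^{1/q}`.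
-/

open Real

/-- Young's inequality for the factors `(C μ)^{1/μ} s` and `a / (C μ)^{1/μ}`. -/
theorem mul_le_mul_rpow_add_div_rpow {μ μs C a s : ℝ} (hμ : μ.HolderConjugate μs)
    (hC : 0 < C) (ha : 0 ≤ a) (hs : 0 ≤ s) :
    a * s ≤ C * s ^ μ + (a / (C * μ) ^ (1 / μ)) ^ μs / μs := by
  have hμ0 : 0 < μ := hμ.pos
  have hA : 0 < (C * μ) ^ (1 / μ) := rpow_pos_of_pos (by positivity) _
  have hAs : ((C * μ) ^ (1 / μ) * s) ^ μ = C * μ * s ^ μ := by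
    rw [mul_rpow hA.le hs, ← rpow_mul (by positivity), one_div_mul_cancel hμ0.ne', rpow_one]
  have young := young_inequality_of_nonneg (mul_nonneg hA.le hs) (div_nonneg ha hA.le) hμ
  rw [hAs, mul_right_comm C, mul_div_cancel_right₀ _ hμ0.ne'] at young
  calc a * s = (C * μ) ^ (1 / μ) * s * (a / (C * μ) ^ (1 / μ)) := by field_simp
    _ ≤ _ := young

theorem rpow_neg_mul_rpow_rpow_one_div {t x q : ℝ} (ht : 0 < t) (hx : 0 ≤ x) (hq : q ≠ 0) :
    (t ^ (-q) * x ^ q) ^ (1 / q) = x / t := by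
  rw [rpow_neg ht.le, ← inv_rpow ht.le, ← mul_rpow (by positivity) hx,
    ← rpow_mul (by positivity), mul_one_div_cancel hq, rpow_one, inv_mul_eq_div]

theorem ContinuousLinearMap.apply_le_opNorm_mul_norm {E : Type*} [SeminormedAddCommGroup E]
    [NormedSpace ℝ E] (φ : E →L[ℝ] ℝ) (x : E) : φ x ≤ ‖φ‖ * ‖x‖ :=
  (le_abs_self _).trans (φ.le_opNorm x)

theorem stmt_12_general {X Y : Type*} [NormedAddCommGroup X] [NormedSpace ℝ X]
    [NormedAddCommGroup Y] [NormedSpace ℝ Y]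
    (T : X →L[ℝ] Y) (q : ℝ) (hq : 1 < q)
    (R : X → ℝ)
    (fdag : X) (pbar : Y →L[ℝ] ℝ)
    (ωbar : X) (tbar : ℝ)
    (ξ : ℝ → (X →L[ℝ] ℝ))
    (hξ : ∀ t ∈ Set.Ioc (0 : ℝ) tbar, ∀ h : X,
      R (fdag - t • ωbar) + (ξ t) (h - (fdag - t • ωbar)) ≤ R h)
    -- (a) Taylor-type bound for the subgradients
    (Cω : ℝ) (hCω : 0 ≤ Cω) (ωstar : X →L[ℝ] ℝ)
    (ha : ∀ t ∈ Set.Ioc (0 : ℝ) tbar, ‖pbar.comp T - ξ t - t • ωstar‖ ≤ Cω * t ^ 2)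
    -- (b) μ-convexity of R
    (μ μs Cμ : ℝ) (hμ : 1 < μ) (hμs : 1 / μ + 1 / μs = 1) (hCμ : 0 < Cμ)
    (hb : ∀ (f₁ f₂ : X) (ζ : X →L[ℝ] ℝ),
      (∀ h : X, R f₂ + ζ (h - f₂) ≤ R h) →
      R f₁ - R f₂ - ζ (f₁ - f₂) ≥ Cμ * ‖f₁ - f₂‖ ^ μ)
    -- (c) ω* in the range of T*
    (p2bar : Y →L[ℝ] ℝ) (hc : ωstar = p2bar.comp T) :
    ∃ β : ℝ, 0 ≤ β ∧ ∀ f : X, ∀ t ∈ Set.Ioc (0 : ℝ) tbar,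
      (ξ t - pbar.comp T) (fdag - t • ωbar - f)
        ≤ R f - R (fdag - t • ωbar) - (ξ t) (f - (fdag - t • ωbar))
          + t ^ 2 * (‖p2bar‖ * (t ^ (-q) * ‖T f - T fdag + t • T ωbar‖ ^ q) ^ (1 / q))
          + β * t ^ (2 * μs) := by
  have hμμs : μ.HolderConjugate μs := holderConjugate_iff.mpr ⟨hμ, by simpa [one_div] using hμs⟩
  have hμs0 : 0 < μs := hμμs.symm.pos
  set A := (Cμ * μ) ^ (1 / μ)
  have hA : 0 < A := rpow_pos_of_pos (by positivity) _
  refine ⟨(Cω / A) ^ μs / μs, by positivity, ?_⟩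
  rintro f t ht
  set g := fdag - t • ωbar
  have hTfg : T (f - g) = T f - T fdag + t • T ωbar := by simp only [g, map_sub, map_smul]; abel
  have hsplit : (ξ t - pbar.comp T) (g - f)
      = (pbar.comp T - ξ t - t • ωstar) (f - g) + t * p2bar (T (f - g)) := by
    simp only [hc, sub_apply, smul_apply,
      ContinuousLinearMap.comp_apply, smul_eq_mul, map_sub]
    ring
  have herror : (pbar.comp T - ξ t - t • ωstar) (f - g)
      ≤ Cμ * ‖f - g‖ ^ μ + (Cω / A) ^ μs / μs * t ^ (2 * μs) :=
    calc _ ≤ Cω * t ^ 2 * ‖f - g‖ := (ContinuousLinearMap.apply_le_opNorm_mul_norm _ _).trans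
            (mul_le_mul_of_nonneg_right (ha t ht) (norm_nonneg _))
      _ ≤ Cμ * ‖f - g‖ ^ μ + (Cω * t ^ 2 / A) ^ μs / μs :=
          mul_le_mul_rpow_add_div_rpow hμμs hCμ (by positivity) (norm_nonneg _)
      _ = Cμ * ‖f - g‖ ^ μ + (Cω / A) ^ μs / μs * t ^ (2 * μs) := by
          rw [mul_div_right_comm, mul_rpow (by positivity) (by positivity),
            ← rpow_natCast_mul ht.1.le]
          push_cast
          ring
  have hmain : t * p2bar (T (f - g))
      ≤ t ^ 2 * (‖p2bar‖ * (t ^ (-q) * ‖T (f - g)‖ ^ q) ^ (1 / q)) := by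
    rw [rpow_neg_mul_rpow_rpow_one_div ht.1 (norm_nonneg _) (by positivity),
      show t ^ 2 * (‖p2bar‖ * (‖T (f - g)‖ / t)) = t * (‖p2bar‖ * ‖T (f - g)‖) by
        field_simp]
    exact mul_le_mul_of_nonneg_left (p2bar.apply_le_opNorm_mul_norm _) ht.1.le
  have hbregman := hb f g (ξ t) (hξ t ht)
  rw [← hTfg]
  linarith

/-- Verification of the third order variational source condition
(Proposition `prop_vsc3_proof`, case 1, of the paper): a second order Taylor bound
for the subgradients, a `μ`-convexity lower bound for the Bregman distance of `R`,
and `ω* = p̄⁽²⁾ ∘ T` imply `VSC³` with `Φ(τ) = ‖p̄⁽²⁾‖ τ^{1/q}`. -/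
theorem stmt_12 {X Y : Type*} [NormedAddCommGroup X] [NormedSpace ℝ X]
    [NormedAddCommGroup Y] [NormedSpace ℝ Y]
    (T : X →L[ℝ] Y) (q : ℝ) (hq : 1 < q)
    (R : X → ℝ) (hR : ConvexOn ℝ Set.univ R)
    (fdag : X) (pbar : Y →L[ℝ] ℝ)
    (hpbar : ∀ h : X, R fdag + (pbar.comp T) (h - fdag) ≤ R h)
    (ωbar : X) (tbar : ℝ) (htbar : 0 < tbar) (htbar1 : tbar ≤ 1)
    (ξ : ℝ → (X →L[ℝ] ℝ))
    (hξ : ∀ t ∈ Set.Ioc (0 : ℝ) tbar, ∀ h : X,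
      R (fdag - t • ωbar) + (ξ t) (h - (fdag - t • ωbar)) ≤ R h)
    -- (a) Taylor-type bound for the subgradients
    (Cω : ℝ) (hCω : 0 ≤ Cω) (ωstar : X →L[ℝ] ℝ)
    (ha : ∀ t ∈ Set.Ioc (0 : ℝ) tbar, ‖pbar.comp T - ξ t - t • ωstar‖ ≤ Cω * t ^ 2)
    -- (b) μ-convexity of R
    (μ μs Cμ : ℝ) (hμ : 1 < μ) (hμs : 1 / μ + 1 / μs = 1) (hCμ : 0 < Cμ)
    (hb : ∀ (f₁ f₂ : X) (ζ : X →L[ℝ] ℝ),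
      (∀ h : X, R f₂ + ζ (h - f₂) ≤ R h) →
      R f₁ - R f₂ - ζ (f₁ - f₂) ≥ Cμ * ‖f₁ - f₂‖ ^ μ)
    -- (c) ω* in the range of T*
    (p2bar : Y →L[ℝ] ℝ) (hc : ωstar = p2bar.comp T) :
    ∃ β : ℝ, 0 ≤ β ∧ ∀ f : X, ∀ t ∈ Set.Ioc (0 : ℝ) tbar,
      (ξ t - pbar.comp T) (fdag - t • ωbar - f)
        ≤ R f - R (fdag - t • ωbar) - (ξ t) (f - (fdag - t • ωbar))
          + t ^ 2 * (‖p2bar‖ * (t ^ (-q) * ‖T f - T fdag + t • T ωbar‖ ^ q) ^ (1 / q))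
          + β * t ^ (2 * μs) :=
  stmt_12_general T q hq R fdag pbar ωbar tbar ξ hξ Cω hCω ωstar ha μ μs Cμ hμ hμs hCμ hb p2bar hc
end

section
/- Let Y be a real Banach space that is convex of power type r for some r ≥ 2, in the sense that there is K > 0 such that 1 − ‖(y + ỹ)/2‖ ≥ K ‖y − ỹ‖^r for all y, ỹ ∈ Y with ‖y‖ = ‖ỹ‖ = 1. Let q > 1 and S(y) := (1/q)‖y‖^q. Then there exists a constant c > 0, depending only on q, r and K, such that for all x, y ∈ Y and every y* ∈ ∂S(y): if q ≤ r then S(x) − S(y) − y*(x − y) ≥ c · max(‖y‖, ‖x − y‖)^{q−r} ‖x − y‖^r, and if q ≥ r then S(x) − S(y) − y*(x − y) ≥ c · ‖y‖^{q−r} ‖x − y‖^r. -/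
/-!
Evaluating the subgradient inequality at the midpoint `m = (x + y) / 2` bounds the Bregman
distance from below by `(‖x‖^q + ‖y‖^q - 2‖m‖^q) / q`, so it suffices to bound this midpoint
defect from below by `c · max(‖x‖, ‖y‖)^(q-r) ‖x - y‖^r`. By homogeneity we may take
`‖x‖ = 1 ≥ ‖y‖ = b`.
The defect is then at least the scalar defect `1 + b^q - 2((1 + b)/2)^q ≳ (1 - b)²`, which comes
from the strong convexity of `t ↦ t^q` on `[1/2, 1]`, plus a multiple of `(1 + b)/2 - ‖m‖`.
If `‖x - y‖ ≤ 2(1 - b)` the first term suffices. Otherwise `x` is far from the unit vector `y/b`,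
and writing `m = b · (x + y/b)/2 + (1 - b)/2 · x`, convexity of power type `r` gives
`(1 + b)/2 - ‖m‖ ≥ b K ‖x - y/b‖^r ≳ b ‖x - y‖^r`.
-/

open Real Set

theorem rpow_add_mul_rpow_sub_one_mul_sub_le {q : ℝ} (hq : 1 ≤ q) {a b : ℝ} (ha : 0 < a)
    (hb : 0 ≤ b) : a ^ q + q * a ^ (q - 1) * (b - a) ≤ b ^ q := by
  have hbernoulli := one_add_mul_self_le_rpow_one_add (s := b / a - 1)
    (by linarith [div_nonneg hb ha.le]) hq
  rw [add_sub_cancel, div_rpow hb ha.le, le_div_iff₀ (rpow_pos_of_pos ha q)] at hbernoulli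
  calc a ^ q + q * a ^ (q - 1) * (b - a) = (1 + q * (b / a - 1)) * a ^ q := by
        rw [rpow_sub_one ha.ne']; field_simp
    _ ≤ b ^ q := hbernoulli

theorem rpow_sub_one_mul_sub_le_rpow_sub_rpow {q : ℝ} (hq : 1 ≤ q) {a b : ℝ} (ha : 0 ≤ a)
    (hab : a ≤ b) : b ^ (q - 1) * (b - a) ≤ b ^ q - a ^ q := by
  have hpow : ∀ c : ℝ, 0 ≤ c → c ^ q = c ^ (q - 1) * c := fun c hc => by
    rw [← rpow_add_one' hc (by linarith), sub_add_cancel]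
  rw [hpow a ha, hpow b (ha.trans hab)]
  nlinarith [rpow_le_rpow ha hab (by linarith : 0 ≤ q - 1)]

theorem sq_le_one_sub_rpow_sub_mul_rpow_sub_one {q : ℝ} (hq : 1 < q) {s : ℝ}
    (hs : s ∈ Icc (1 / 2 : ℝ) 1) :
    q * (q - 1) / 2 * (1 / 2) ^ q * (1 - s) ^ 2 ≤ 1 - s ^ q - q * s ^ (q - 1) * (1 - s) := by
  set κ := q * (q - 1) / 2 * (1 / 2 : ℝ) ^ q
  set H : ℝ → ℝ := fun s => s ^ q + q * s ^ (q - 1) * (1 - s) + κ * (1 - s) ^ 2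
  have hH : ∀ s : ℝ, 0 < s →
      HasDerivAt H ((1 - s) * (q * (q - 1) * s ^ (q - 2) - 2 * κ)) s := by
    intro s hs
    have h1 := hasDerivAt_rpow_const (x := s) (p := q) (Or.inl hs.ne')
    have h2 := hasDerivAt_rpow_const (x := s) (p := q - 1) (Or.inl hs.ne')
    rw [show q - 1 - 1 = q - 2 by ring] at h2
    have h3 : HasDerivAt (fun s : ℝ => 1 - s) (-1) s := by
      simpa using (hasDerivAt_id s).const_sub 1
    refine (h1.add ((h2.const_mul q).mul h3)).add ((h3.pow 2).const_mul κ) |>.congr_deriv ?_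
    rw [rpow_sub_one hs.ne', show q - 2 = q - 1 - 1 by ring, rpow_sub_one hs.ne',
      rpow_sub_one hs.ne']
    field_simp
    ring
  have hmono : MonotoneOn H (Icc (1 / 2) 1) := by
    refine monotoneOn_of_deriv_nonneg (convex_Icc _ _) ?_ ?_ ?_
    · exact fun s hs => (hH s (by linarith [hs.1])).continuousAt.continuousWithinAt
    · rw [interior_Icc]
      exact fun s hs => (hH s (by linarith [hs.1])).differentiableAt.differentiableWithinAt
    · rw [interior_Icc]
      intro s hs
      have hs0 : 0 < s := by linarith [hs.1]
      rw [(hH s hs0).deriv]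
      have : (1 / 2 : ℝ) ^ q ≤ s ^ (q - 2) :=
        calc (1 / 2 : ℝ) ^ q ≤ s ^ q := rpow_le_rpow (by norm_num) hs.1.le (by linarith)
          _ ≤ s ^ (q - 2) := rpow_le_rpow_of_exponent_ge hs0 hs.2.le (by linarith)
      have hq' : 0 ≤ q * (q - 1) := by nlinarith
      have h2κ : 2 * κ ≤ q * (q - 1) * s ^ (q - 2) := by
        calc 2 * κ = q * (q - 1) * (1 / 2) ^ q := by ring
          _ ≤ q * (q - 1) * s ^ (q - 2) := mul_le_mul_of_nonneg_left this hq'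
      exact mul_nonneg (by linarith [hs.2]) (by linarith)
  have hH1 : H 1 = 1 := by simp [H]
  have hHs : H s ≤ 1 := hH1 ▸ hmono hs ⟨by norm_num, le_rfl⟩ hs.2
  simp only [H] at hHs
  linarith

theorem sq_le_one_add_rpow_sub_two_mul_rpow_midpoint {q : ℝ} (hq : 1 < q) {b : ℝ} (hb0 : 0 ≤ b)
    (hb1 : b ≤ 1) :
    q * (q - 1) / 8 * (1 / 2) ^ q * (1 - b) ^ 2 ≤ 1 + b ^ q - 2 * ((1 + b) / 2) ^ q := by
  have hbregman := sq_le_one_sub_rpow_sub_mul_rpow_sub_one hq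
    (s := (1 + b) / 2) ⟨by linarith, by linarith⟩
  have htangent := rpow_add_mul_rpow_sub_one_mul_sub_le hq.le (a := (1 + b) / 2)
    (by linarith) hb0
  linear_combination hbregman + htangent

def IsConvexOfPowerType (Y : Type*) [NormedAddCommGroup Y] [NormedSpace ℝ Y] (r K : ℝ) : Prop :=
  ∀ y z : Y, ‖y‖ = 1 → ‖z‖ = 1 → K * ‖y - z‖ ^ r ≤ 1 - ‖(1 / 2 : ℝ) • (y + z)‖

section

variable {Y : Type*} [NormedAddCommGroup Y] [NormedSpace ℝ Y]

noncomputable def midpointDefect (q : ℝ) (x y : Y) : ℝ :=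
  ‖x‖ ^ q + ‖y‖ ^ q - 2 * ‖(1 / 2 : ℝ) • (x + y)‖ ^ q

theorem midpointDefect_comm (q : ℝ) (x y : Y) : midpointDefect q x y = midpointDefect q y x := by
  simp only [midpointDefect, add_comm]

theorem midpointDefect_smul (q : ℝ) {t : ℝ} (ht : 0 ≤ t) (x y : Y) :
    midpointDefect q (t • x) (t • y) = t ^ q * midpointDefect q x y := by
  have hnorm : ∀ z : Y, ‖t • z‖ ^ q = t ^ q * ‖z‖ ^ q := fun z => by
    rw [norm_smul, norm_of_nonneg ht, mul_rpow ht (norm_nonneg z)]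
  rw [midpointDefect, midpointDefect, ← smul_add, smul_comm, hnorm, hnorm, hnorm]
  ring

theorem norm_half_smul_add_le (x y : Y) : ‖(1 / 2 : ℝ) • (x + y)‖ ≤ (‖x‖ + ‖y‖) / 2 := by
  rw [norm_smul, norm_of_nonneg (by norm_num : (0 : ℝ) ≤ 1 / 2)]
  linarith [norm_add_le x y]

theorem sq_add_mul_sub_norm_half_smul_add_le_midpointDefect {q : ℝ} (hq : 1 < q) {x y : Y}
    (hx : ‖x‖ = 1) (hy : ‖y‖ ≤ 1) :
    q * (q - 1) / 8 * (1 / 2) ^ q * (1 - ‖y‖) ^ 2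
        + 2 * (1 / 2) ^ (q - 1) * ((1 + ‖y‖) / 2 - ‖(1 / 2 : ℝ) • (x + y)‖)
      ≤ midpointDefect q x y := by
  have hm := norm_half_smul_add_le x y
  rw [hx] at hm
  have hdefect := sq_le_one_add_rpow_sub_two_mul_rpow_midpoint hq (norm_nonneg y) hy
  have hhalf : (1 / 2 : ℝ) ^ (q - 1) ≤ ((1 + ‖y‖) / 2) ^ (q - 1) :=
    rpow_le_rpow (by norm_num) (by linarith [norm_nonneg y]) (by linarith)
  have hgap := rpow_sub_one_mul_sub_le_rpow_sub_rpow hq.le (norm_nonneg _) hm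
  rw [midpointDefect, hx, one_rpow]
  nlinarith [mul_le_mul_of_nonneg_right hhalf (sub_nonneg.2 hm)]

theorem IsConvexOfPowerType.norm_half_smul_add_add_mul_rpow_le {r K : ℝ}
    (hY : IsConvexOfPowerType Y r K) (hr : 0 ≤ r) (hK : 0 ≤ K) {x y : Y} (hx : ‖x‖ = 1)
    (hy : ‖y‖ ≤ 1) (hfar : 2 * (1 - ‖y‖) < ‖x - y‖) :
    ‖(1 / 2 : ℝ) • (x + y)‖ + ‖y‖ * K * (‖x - y‖ / 2) ^ r ≤ (1 + ‖y‖) / 2 := by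
  have hb : 0 < ‖y‖ := by linarith [norm_sub_le x y]
  set b := ‖y‖
  set v := b⁻¹ • y
  have hbv : b • v = y := by rw [smul_smul, mul_inv_cancel₀ hb.ne', one_smul]
  have hv : ‖v‖ = 1 := by rw [norm_smul, norm_inv, norm_norm, inv_mul_cancel₀ hb.ne']
  have hyv : ‖y - v‖ = 1 - b := by
    rw [show y - v = (b - 1) • v by rw [sub_smul, one_smul, hbv], norm_smul, hv, mul_one,
      norm_of_nonpos (by linarith), neg_sub]
  have hxv : ‖x - y‖ / 2 ≤ ‖x - v‖ := by
    linarith [norm_sub_le_norm_sub_add_norm_sub x v y, norm_sub_rev v y]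
  have hsplit : (1 / 2 : ℝ) • (x + y) = b • ((1 / 2 : ℝ) • (x + v)) + ((1 - b) / 2) • x := by
    rw [← hbv]
    module
  calc ‖(1 / 2 : ℝ) • (x + y)‖ + b * K * (‖x - y‖ / 2) ^ r
      ≤ b * ‖(1 / 2 : ℝ) • (x + v)‖ + (1 - b) / 2 + b * K * ‖x - v‖ ^ r := by
        grw [hsplit, norm_add_le, norm_smul b, norm_smul _ x, hx, norm_of_nonneg hb.le,
          norm_of_nonneg (by linarith : 0 ≤ (1 - b) / 2), mul_one, hxv]
    _ ≤ b * 1 + (1 - b) / 2 := by nlinarith [hY x v hx hv]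
    _ = (1 + b) / 2 := by ring

theorem exists_mul_rpow_le_midpointDefect_of_norm_eq_one {r K q : ℝ}
    (hY : IsConvexOfPowerType Y r K) (hr : 2 ≤ r) (hK : 0 < K) (hq : 1 < q) :
    ∃ c > 0, ∀ x y : Y, ‖x‖ = 1 → ‖y‖ ≤ 1 → c * ‖x - y‖ ^ r ≤ midpointDefect q x y := by
  set κ := q * (q - 1) / 8 * (1 / 2 : ℝ) ^ q
  set γ := (1 / 2 : ℝ) ^ (q - 1)
  have hκ : 0 < κ := by
    have : 0 < q - 1 := by linarith
    positivity
  have hγ : 0 < γ := by positivity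
  set c := min (κ / 4) (γ * K)
  have hκc : c ≤ κ / 4 := min_le_left _ _
  have hγc : c ≤ γ * K := min_le_right _ _
  refine ⟨c * (1 / 2) ^ r, by positivity, fun x y hx hy => ?_⟩
  have hF : κ * (1 - ‖y‖) ^ 2 + 2 * γ * ((1 + ‖y‖) / 2 - ‖(1 / 2 : ℝ) • (x + y)‖)
      ≤ midpointDefect q x y := sq_add_mul_sub_norm_half_smul_add_le_midpointDefect hq hx hy
  have hm := norm_half_smul_add_le x y
  rw [hx] at hm
  have hd : ‖x - y‖ / 2 ≤ 1 := by linarith [norm_sub_le x y]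
  rw [show c * (1 / 2) ^ r * ‖x - y‖ ^ r = c * (‖x - y‖ / 2) ^ r by
    rw [div_eq_mul_one_div ‖x - y‖, mul_rpow (norm_nonneg _) (by norm_num)]; ring]
  rcases le_or_gt ‖x - y‖ (2 * (1 - ‖y‖)) with hclose | hfar
  · have hclose' : (‖x - y‖ / 2) ^ r ≤ (1 - ‖y‖) ^ 2 :=
      calc (‖x - y‖ / 2) ^ r ≤ (‖x - y‖ / 2) ^ (2 : ℝ) :=
            rpow_le_rpow_of_exponent_ge' (by positivity) hd (by norm_num) hr
        _ = (‖x - y‖ / 2) ^ 2 := rpow_two _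
        _ ≤ (1 - ‖y‖) ^ 2 := pow_le_pow_left₀ (by positivity) (by linarith) 2
    nlinarith [mul_le_mul_of_nonneg_right hκc (by positivity : 0 ≤ (‖x - y‖ / 2) ^ r),
      mul_le_mul_of_nonneg_left hclose' hκ.le]
  · have hconv := hY.norm_half_smul_add_add_mul_rpow_le (by linarith) hK.le hx hy hfar
    set b := ‖y‖
    set t := (‖x - y‖ / 2) ^ r
    have ht : t ≤ 1 := rpow_le_one (by positivity) hd (by linarith)
    have ht0 : 0 ≤ t := by positivity
    have hb : 0 ≤ b := norm_nonneg y
    -- `c t ≤ c t (4 (1 - b)² + 2 b) ≤ κ (1 - b)² + 2 γ b K t`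
    nlinarith [mul_le_mul_of_nonneg_left ht (mul_nonneg hκ.le (sq_nonneg (1 - b))),
      mul_le_mul_of_nonneg_right hκc (mul_nonneg (sq_nonneg (1 - b)) ht0),
      mul_le_mul_of_nonneg_left hconv hγ.le,
      mul_le_mul_of_nonneg_right hγc (mul_nonneg hb ht0),
      mul_nonneg (by positivity : 0 ≤ c * t) (by nlinarith : 0 ≤ 4 * b ^ 2 - 6 * b + 3)]

theorem exists_mul_max_rpow_mul_le_midpointDefect {r K q : ℝ}
    (hY : IsConvexOfPowerType Y r K) (hr : 2 ≤ r) (hK : 0 < K) (hq : 1 < q) :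
    ∃ c > 0, ∀ x y : Y,
      c * max ‖x‖ ‖y‖ ^ (q - r) * ‖x - y‖ ^ r ≤ midpointDefect q x y := by
  obtain ⟨c, hc, hunit⟩ := exists_mul_rpow_le_midpointDefect_of_norm_eq_one hY hr hK hq
  refine ⟨c, hc, fun x y => ?_⟩
  wlog hyx : ‖y‖ ≤ ‖x‖ generalizing x y with H
  · simpa only [max_comm, norm_sub_rev, midpointDefect_comm] using H y x (le_of_not_ge hyx)
  rw [max_eq_left hyx]
  rcases (norm_nonneg x).eq_or_lt with hx | hx
  · have hy : y = 0 := norm_le_zero_iff.1 (hx ▸ hyx)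
    rw [norm_eq_zero.1 hx.symm, hy]
    simp [midpointDefect, zero_rpow (by linarith : r ≠ 0), zero_rpow (by linarith : q ≠ 0)]
  set N := ‖x‖
  have hscale : ∀ z : Y, N • N⁻¹ • z = z := fun z => by
    rw [smul_smul, mul_inv_cancel₀ hx.ne', one_smul]
  have hunit' := hunit (N⁻¹ • x) (N⁻¹ • y)
    (by rw [norm_smul, norm_inv, norm_norm, inv_mul_cancel₀ hx.ne'])
    (by rw [norm_smul, norm_inv, norm_norm, inv_mul_le_one₀ hx]; exact hyx)
  calc c * N ^ (q - r) * ‖x - y‖ ^ r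
      = N ^ q * (c * ‖N⁻¹ • x - N⁻¹ • y‖ ^ r) := by
        rw [← smul_sub, norm_smul, norm_inv, norm_norm, mul_rpow (by positivity) (norm_nonneg _),
          inv_rpow hx.le, rpow_sub hx]
        field_simp
    _ ≤ N ^ q * midpointDefect q (N⁻¹ • x) (N⁻¹ • y) := by gcongr
    _ = midpointDefect q x y := by rw [← midpointDefect_smul q hx.le, hscale, hscale]

end

theorem add_sub_two_mul_apply_midpoint_le_of_subgradient {E : Type*} [AddCommGroup E]
    [Module ℝ E] {f : E → ℝ} {x y : E} {ℓ : E →ₗ[ℝ] ℝ} (hsub : ∀ h, f y + ℓ (h - y) ≤ f h) :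
    f x + f y - 2 * f ((1 / 2 : ℝ) • (x + y)) ≤ f x - f y - ℓ (x - y) := by
  have hmid := hsub ((1 / 2 : ℝ) • (x + y))
  rw [show (1 / 2 : ℝ) • (x + y) - y = (1 / 2 : ℝ) • (x - y) by module, map_smul,
    smul_eq_mul] at hmid
  linarith

theorem max_norm_le_two_mul_max_norm_sub {E : Type*} [SeminormedAddGroup E] (x y : E) :
    max ‖x‖ ‖y‖ ≤ 2 * max ‖y‖ ‖x - y‖ := by
  have := norm_le_norm_add_norm_sub' x y
  have := le_max_left ‖y‖ ‖x - y‖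
  have := le_max_right ‖y‖ ‖x - y‖
  exact max_le (by linarith) (by linarith [norm_nonneg (x - y)])

theorem two_rpow_mul_max_norm_sub_rpow_le {E : Type*} [SeminormedAddGroup E] {s : ℝ}
    (hs : s ≤ 0) {x y : E} (hxy : 0 < ‖x - y‖) :
    2 ^ s * max ‖y‖ ‖x - y‖ ^ s ≤ max ‖x‖ ‖y‖ ^ s := by
  rw [← mul_rpow zero_le_two (hxy.le.trans (le_max_right _ _))]
  refine rpow_le_rpow_of_nonpos ?_ (max_norm_le_two_mul_max_norm_sub x y) hs
  linarith [norm_sub_le x y, le_max_left ‖x‖ ‖y‖, le_max_right ‖x‖ ‖y‖]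

theorem stmt_14_general {Y : Type*} [NormedAddCommGroup Y] [NormedSpace ℝ Y]
    (r : ℝ) (hr : 2 ≤ r) (K : ℝ) (hK : 0 < K)
    -- Y is convex of power type r
    (hconv : ∀ y ytld : Y, ‖y‖ = 1 → ‖ytld‖ = 1 →
      1 - ‖(1 / 2 : ℝ) • (y + ytld)‖ ≥ K * ‖y - ytld‖ ^ r)
    (q : ℝ) (hq : 1 < q) :
    ∃ c : ℝ, 0 < c ∧
      ∀ (x y : Y) (ystar : Y →L[ℝ] ℝ),
        (∀ h : Y, 1 / q * ‖y‖ ^ q + ystar (h - y) ≤ 1 / q * ‖h‖ ^ q) →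
        ((q ≤ r →
          1 / q * ‖x‖ ^ q - 1 / q * ‖y‖ ^ q - ystar (x - y)
            ≥ c * (max ‖y‖ ‖x - y‖) ^ (q - r) * ‖x - y‖ ^ r) ∧
        (r ≤ q →
          1 / q * ‖x‖ ^ q - 1 / q * ‖y‖ ^ q - ystar (x - y)
            ≥ c * ‖y‖ ^ (q - r) * ‖x - y‖ ^ r)) := by
  obtain ⟨c, hc, hgap⟩ := exists_mul_max_rpow_mul_le_midpointDefect hconv hr hK hq
  have hq0 : 0 < q := by linarith
  refine ⟨c / q * min (2 ^ (q - r)) 1, by positivity, fun x y ystar hsub => ?_⟩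
  have hbregman : c / q * (max ‖x‖ ‖y‖ ^ (q - r) * ‖x - y‖ ^ r) ≤
      1 / q * ‖x‖ ^ q - 1 / q * ‖y‖ ^ q - ystar (x - y) :=
    calc c / q * (max ‖x‖ ‖y‖ ^ (q - r) * ‖x - y‖ ^ r)
        = 1 / q * (c * max ‖x‖ ‖y‖ ^ (q - r) * ‖x - y‖ ^ r) := by ring
      _ ≤ 1 / q * midpointDefect q x y := by gcongr; exact hgap x y
      _ = 1 / q * ‖x‖ ^ q + 1 / q * ‖y‖ ^ q - 2 * (1 / q * ‖(1 / 2 : ℝ) • (x + y)‖ ^ q) := by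
        rw [midpointDefect]; ring
      _ ≤ _ := add_sub_two_mul_apply_midpoint_le_of_subgradient
        (f := fun z => 1 / q * ‖z‖ ^ q) (ℓ := ystar.toLinearMap) hsub
  refine ⟨fun hqr => le_trans ?_ hbregman, fun hrq => le_trans ?_ hbregman⟩
  · rcases (norm_nonneg (x - y)).eq_or_lt with hd | hd
    · simp [← hd, zero_rpow (by linarith : r ≠ 0)]
    rw [mul_assoc, mul_assoc, ← mul_assoc (min _ _)]
    gcongr
    exact (mul_le_mul_of_nonneg_right (min_le_left _ _) (by positivity)).trans
      (two_rpow_mul_max_norm_sub_rpow_le (by linarith) hd)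
  · rw [mul_assoc, mul_assoc, ← mul_assoc (min _ _)]
    gcongr
    exact (mul_le_of_le_one_left (by positivity) (min_le_right _ _)).trans
      (rpow_le_rpow (norm_nonneg _) (le_max_right _ _) (by linarith))

/-- Xu–Roach type lower bound for the Bregman distance of
`S = (1/q)‖·‖^q` on an `r`-convex Banach space `Y` (Lemma `xu-roach` of the paper):
there is `c > 0` depending only on `q`, `r` and the convexity constant `K` such that
`D_S(x, y) ≥ c · max(‖y‖, ‖x−y‖)^{q−r} ‖x−y‖^r` if `q ≤ r`, and
`D_S(x, y) ≥ c · ‖y‖^{q−r} ‖x−y‖^r` if `q ≥ r`. -/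
theorem stmt_14 {Y : Type*} [NormedAddCommGroup Y] [NormedSpace ℝ Y] [CompleteSpace Y]
    (r : ℝ) (hr : 2 ≤ r) (K : ℝ) (hK : 0 < K)
    -- Y is convex of power type r
    (hconv : ∀ y ytld : Y, ‖y‖ = 1 → ‖ytld‖ = 1 →
      1 - ‖(1 / 2 : ℝ) • (y + ytld)‖ ≥ K * ‖y - ytld‖ ^ r)
    (q : ℝ) (hq : 1 < q) :
    ∃ c : ℝ, 0 < c ∧
      ∀ (x y : Y) (ystar : Y →L[ℝ] ℝ),
        (∀ h : Y, 1 / q * ‖y‖ ^ q + ystar (h - y) ≤ 1 / q * ‖h‖ ^ q) →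
        ((q ≤ r →
          1 / q * ‖x‖ ^ q - 1 / q * ‖y‖ ^ q - ystar (x - y)
            ≥ c * (max ‖y‖ ‖x - y‖) ^ (q - r) * ‖x - y‖ ^ r) ∧
        (r ≤ q →
          1 / q * ‖x‖ ^ q - 1 / q * ‖y‖ ^ q - ystar (x - y)
            ≥ c * ‖y‖ ^ (q - r) * ‖x - y‖ ^ r)) :=
  stmt_14_general r hr K hK hconv q hq
end

section
/- Let X, Y be real Hilbert spaces, T : X → Y a bounded linear operator with adjoint T*, f† ∈ X and n ≥ 1. Then the following are equivalent: (i) there exists w ∈ X with f† = (T*T)^n w; (ii) there exist A > 0 and p̄ ∈ Y such that f† = (T*T)^{n−1} T* p̄ and ⟪p, p̄⟫ ≤ (1/2)‖p‖² + A ‖T* p‖ for all p ∈ Y. -/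
open scoped RealInnerProductSpace

/-- In Hilbert spaces, the spectral source condition
`f† ∈ ran((T*T)^n)` is equivalent to the variational source condition
`VSC^{2n}(f†, A√·)`: existence of `p̄ ∈ Y` with `f† = (T*T)^{n−1} T* p̄` and
`⟪p, p̄⟫ ≤ (1/2)‖p‖² + A‖T* p‖` for all `p ∈ Y`. -/
theorem stmt_15 {X Y : Type*}
    [NormedAddCommGroup X] [InnerProductSpace ℝ X] [CompleteSpace X]
    [NormedAddCommGroup Y] [InnerProductSpace ℝ Y] [CompleteSpace Y]
    (T : X →L[ℝ] Y) (fdag : X) (n : ℕ) (hn : 1 ≤ n) :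
    (∃ w : X, fdag = ((ContinuousLinearMap.adjoint T ∘L T) ^ n) w) ↔
    (∃ A : ℝ, 0 < A ∧ ∃ pbar : Y,
      fdag = ((ContinuousLinearMap.adjoint T ∘L T) ^ (n - 1))
        (ContinuousLinearMap.adjoint T pbar) ∧
      ∀ p : Y, ⟪p, pbar⟫ ≤ 1 / 2 * ‖p‖ ^ 2 + A * ‖ContinuousLinearMap.adjoint T p‖) := by
  set S := ContinuousLinearMap.adjoint T ∘L T with hS
  have hpow : ∀ x, (S ^ (n - 1)) (S x) = (S ^ n) x := by
    intro x
    rw [← ContinuousLinearMap.mul_apply, ← pow_succ, Nat.sub_add_cancel hn]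
  constructor
  · rintro ⟨w, hw⟩
    refine ⟨‖w‖ + 1, by positivity, T w, ?_, ?_⟩
    · rw [hw, ← hpow w]; rfl
    · intro p
      have h1 : ⟪p, T w⟫ = ⟪ContinuousLinearMap.adjoint T p, w⟫ := by
        rw [ContinuousLinearMap.adjoint_inner_left]
      have h2 : ⟪ContinuousLinearMap.adjoint T p, w⟫ ≤
          ‖ContinuousLinearMap.adjoint T p‖ * ‖w‖ := real_inner_le_norm _ _
      have h3 : (0:ℝ) ≤ ‖ContinuousLinearMap.adjoint T p‖ := norm_nonneg _
      nlinarith [sq_nonneg ‖p‖]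
  · rintro ⟨A, hA, pbar, hfd, hineq⟩
    -- Step 1: linear bound
    have h1 : ∀ p : Y, ⟪p, pbar⟫ ≤ A * ‖ContinuousLinearMap.adjoint T p‖ := by
      intro p
      refine le_of_forall_pos_le_add fun ε hε => ?_
      set t : ℝ := 2 * ε / (‖p‖ ^ 2 + 1) with ht
      have htpos : 0 < t := by positivity
      have hkey := hineq (t • p)
      rw [real_inner_smul_left] at hkey
      rw [norm_smul, map_smul, norm_smul, Real.norm_eq_abs, abs_of_pos htpos] at hkey
      have hdiv : ⟪p, pbar⟫ ≤ t / 2 * ‖p‖ ^ 2 + A * ‖ContinuousLinearMap.adjoint T p‖ := by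
        nlinarith [sq_nonneg ‖p‖]
      have hsmall : t / 2 * ‖p‖ ^ 2 ≤ ε := by
        rw [ht]
        rw [div_mul_eq_mul_div, div_mul_eq_mul_div, div_div]
        rw [div_le_iff₀ (by positivity)]
        nlinarith [sq_nonneg ‖p‖]
      linarith
    have h2 : ∀ p : Y, ContinuousLinearMap.adjoint T p = 0 → ⟪pbar, p⟫ = 0 := by
      intro p hp
      have ha := h1 p
      have hb := h1 (-p)
      rw [hp, norm_zero, mul_zero] at ha
      rw [map_neg, hp, neg_zero, norm_zero, mul_zero, inner_neg_left] at hb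
      rw [real_inner_comm]
      linarith
    -- Douglas lemma
    set Ta : Y →ₗ[ℝ] X := (ContinuousLinearMap.adjoint T).toLinearMap with hTa
    set ψ : Y →ₗ[ℝ] ℝ := ((innerSL ℝ pbar : Y →L[ℝ] ℝ) : Y →ₗ[ℝ] ℝ) with hψ
    have hker : LinearMap.ker Ta ≤ LinearMap.ker ψ := by
      intro p hp
      simp only [LinearMap.mem_ker] at hp ⊢
      exact h2 p hp
    set φ₀ : LinearMap.range Ta →ₗ[ℝ] ℝ :=
      (Submodule.liftQ (LinearMap.ker Ta) ψ hker) ∘ₗ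
        (LinearMap.quotKerEquivRange Ta).symm.toLinearMap with hφ₀
    have hφ₀key : ∀ p : Y, φ₀ ⟨Ta p, LinearMap.mem_range_self _ p⟩ = ⟪pbar, p⟫ := by
      intro p
      have : (LinearMap.quotKerEquivRange Ta).symm ⟨Ta p, LinearMap.mem_range_self _ p⟩ =
          Submodule.Quotient.mk p := by
        rw [LinearMap.quotKerEquivRange_symm_apply_image, Submodule.mkQ_apply]
      simp only [hφ₀, LinearMap.comp_apply, LinearEquiv.coe_toLinearMap, this,
        Submodule.liftQ_apply]
      rfl
    have hφ₀bound : ∀ v : LinearMap.range Ta, ‖φ₀ v‖ ≤ A * ‖v‖ := by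
      rintro ⟨v, p, hp⟩
      have hv : (⟨v, ⟨p, hp⟩⟩ : LinearMap.range Ta) = ⟨Ta p, LinearMap.mem_range_self _ p⟩ := by
        simp [hp]
      rw [hv, hφ₀key]
      have ha := h1 p
      have hb := h1 (-p)
      rw [map_neg, norm_neg, inner_neg_left] at hb
      rw [Real.norm_eq_abs, abs_le]
      have hnn : ‖(⟨Ta p, LinearMap.mem_range_self _ p⟩ : LinearMap.range Ta)‖ =
          ‖ContinuousLinearMap.adjoint T p‖ := rfl
      rw [hnn, real_inner_comm]
      constructor
      · linarith
      · linarith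
    set φ : (LinearMap.range Ta : Submodule ℝ X) →L[ℝ] ℝ :=
      LinearMap.mkContinuous φ₀ A hφ₀bound with hφ
    obtain ⟨g, hgext, hgnorm⟩ := exists_extension_norm_eq (LinearMap.range Ta) φ
    set x : X := (InnerProductSpace.toDual ℝ X).symm g with hx
    have hxg : ∀ v : X, ⟪x, v⟫ = g v := fun v => InnerProductSpace.toDual_symm_apply
    have hTx : T x = pbar := by
      apply ext_inner_right ℝ
      intro p
      have e1 : ⟪T x, p⟫ = ⟪x, ContinuousLinearMap.adjoint T p⟫ := by
        rw [ContinuousLinearMap.adjoint_inner_right]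
      rw [e1, hxg]
      exact (hgext ⟨Ta p, LinearMap.mem_range_self _ p⟩).trans (hφ₀key p)
    refine ⟨x, ?_⟩
    rw [hfd, ← hTx]
    have h5 : ContinuousLinearMap.adjoint T (T x) = S x := rfl
    rw [h5, hpow x]
end

section
/- Let X, Y be real Hilbert spaces, T : X → Y a bounded linear operator with adjoint T*, f† ∈ X and n ≥ 1. Then the following are equivalent: (i) there exists p ∈ Y with f† = (T*T)^{n−1} T* p; (ii) there exist A > 0 and ω ∈ X such that f† = (T*T)^{n−1} ω and ⟪ω, f⟫ ≤ (1/2)‖f‖² + A ‖T f‖ for all f ∈ X. -/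
open scoped RealInnerProductSpace

/-!
(i) ⇒ (ii) is Cauchy–Schwarz for `ω = T* p`. For (ii) ⇒ (i), testing the inequality at `ε • f`
and letting `ε → 0` removes the quadratic term, so `|⟪ω, f⟫| ≤ A ‖T f‖`. Hence `T f ↦ ⟪ω, f⟫`
is a well-defined bounded functional on `ran T`; Hahn–Banach extends it to `Y` and Riesz
represents it by some `q` with `T* q = ω`.
-/

theorem le_of_forall_pos_le_mul_add {a b c : ℝ} (hb : 0 ≤ b) (h : ∀ ε > 0, a ≤ ε * b + c) :
    a ≤ c := by
  refine le_of_forall_pos_le_add fun δ hδ => ?_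
  have hε : 0 < δ / (b + 1) := by positivity
  calc a ≤ δ / (b + 1) * b + c := h _ hε
    _ ≤ δ + c := by
      gcongr
      rw [div_mul_eq_mul_div, div_le_iff₀ (by positivity)]
      nlinarith
    _ = c + δ := add_comm _ _

section Factorization

variable {𝕜 E F : Type*} [RCLike 𝕜] [NormedAddCommGroup E] [NormedSpace 𝕜 E]
  [NormedAddCommGroup F] [NormedSpace 𝕜 F]

theorem ContinuousLinearMap.exists_comp_eq_of_norm_le (T : E →L[𝕜] F) (ℓ : StrongDual 𝕜 E)
    (A : ℝ) (hℓ : ∀ f, ‖ℓ f‖ ≤ A * ‖T f‖) : ∃ g : StrongDual 𝕜 F, g ∘L T = ℓ := by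
  have hker : LinearMap.ker (T : E →ₗ[𝕜] F) ≤ LinearMap.ker (ℓ : E →ₗ[𝕜] 𝕜) := by
    intro f hf
    have hf : T f = 0 := hf
    simpa [hf] using hℓ f
  let φ : LinearMap.range (T : E →ₗ[𝕜] F) →ₗ[𝕜] 𝕜 :=
    (LinearMap.ker (T : E →ₗ[𝕜] F)).liftQ ℓ hker ∘ₗ
      ((T : E →ₗ[𝕜] F).quotKerEquivRange.symm : _ →ₗ[𝕜] _)
  have hφ : ∀ f (hf : (T : E →ₗ[𝕜] F) f ∈ LinearMap.range (T : E →ₗ[𝕜] F)),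
      φ ⟨(T : E →ₗ[𝕜] F) f, hf⟩ = ℓ f := fun f hf => by
    rw [LinearMap.comp_apply, LinearEquiv.coe_coe, LinearMap.quotKerEquivRange_symm_apply_image,
      Submodule.mkQ_apply, Submodule.liftQ_apply, ContinuousLinearMap.coe_coe]
  have hbound : ∀ y, ‖φ y‖ ≤ A * ‖y‖ := by
    rintro ⟨_, f, rfl⟩
    exact (hφ f (LinearMap.mem_range_self _ f)).symm ▸ hℓ f
  obtain ⟨g, hg, -⟩ := exists_extension_norm_eq _ (φ.mkContinuous A hbound)
  refine ⟨g, ContinuousLinearMap.ext fun f => ?_⟩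
  exact (hg ⟨T f, LinearMap.mem_range_self _ f⟩).trans (hφ f _)

end Factorization

section InnerProduct

variable {X Y : Type*} [NormedAddCommGroup X] [InnerProductSpace ℝ X] [CompleteSpace X]
  [NormedAddCommGroup Y] [InnerProductSpace ℝ Y] [CompleteSpace Y]

theorem ContinuousLinearMap.exists_adjoint_eq_of_abs_inner_le (T : X →L[ℝ] Y) (ω : X) (A : ℝ)
    (hω : ∀ f, |⟪ω, f⟫| ≤ A * ‖T f‖) : ∃ q : Y, ContinuousLinearMap.adjoint T q = ω := by
  obtain ⟨g, hg⟩ := T.exists_comp_eq_of_norm_le (innerSL ℝ ω) A hω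
  refine ⟨(InnerProductSpace.toDual ℝ Y).symm g, ext_inner_right ℝ fun f => ?_⟩
  rw [ContinuousLinearMap.adjoint_inner_left, InnerProductSpace.toDual_symm_apply,
    ← ContinuousLinearMap.comp_apply, hg, innerSL_apply_apply]

theorem inner_adjoint_le_norm_mul_norm (T : X →L[ℝ] Y) (p : Y) (f : X) :
    ⟪ContinuousLinearMap.adjoint T p, f⟫ ≤ ‖p‖ * ‖T f‖ := by
  rw [ContinuousLinearMap.adjoint_inner_left]
  exact real_inner_le_norm p (T f)

omit [CompleteSpace X] in
theorem abs_inner_le_of_forall_inner_le_half_norm_sq_add {Z : Type*} [SeminormedAddCommGroup Z]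
    [NormedSpace ℝ Z] (T : X →L[ℝ] Z) {ω : X} {A : ℝ}
    (hω : ∀ f, ⟪ω, f⟫ ≤ 1 / 2 * ‖f‖ ^ 2 + A * ‖T f‖) (f : X) : |⟪ω, f⟫| ≤ A * ‖T f‖ := by
  have hlin : ∀ f, ⟪ω, f⟫ ≤ A * ‖T f‖ := fun f => by
    refine le_of_forall_pos_le_mul_add (b := 1 / 2 * ‖f‖ ^ 2) (by positivity) fun ε hε => ?_
    have h := hω (ε • f)
    rw [real_inner_smul_right, map_smul, norm_smul, norm_smul, Real.norm_of_nonneg hε.le] at h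
    have : ε * ⟪ω, f⟫ ≤ ε * (ε * (1 / 2 * ‖f‖ ^ 2) + A * ‖T f‖) := by linarith
    exact le_of_mul_le_mul_left this hε
  refine abs_le.2 ⟨?_, hlin f⟩
  simpa [inner_neg_right] using neg_le_neg (hlin (-f))

end InnerProduct

theorem stmt_16_general {X Y : Type*}
    [NormedAddCommGroup X] [InnerProductSpace ℝ X] [CompleteSpace X]
    [NormedAddCommGroup Y] [InnerProductSpace ℝ Y] [CompleteSpace Y]
    (T : X →L[ℝ] Y) (fdag : X) (n : ℕ) :
    (∃ p : Y, fdag = ((ContinuousLinearMap.adjoint T ∘L T) ^ (n - 1))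
      (ContinuousLinearMap.adjoint T p)) ↔
    (∃ A : ℝ, 0 < A ∧ ∃ ω : X,
      fdag = ((ContinuousLinearMap.adjoint T ∘L T) ^ (n - 1)) ω ∧
      ∀ f : X, ⟪ω, f⟫ ≤ 1 / 2 * ‖f‖ ^ 2 + A * ‖T f‖) := by
  constructor
  · rintro ⟨p, rfl⟩
    refine ⟨‖p‖ + 1, by positivity, ContinuousLinearMap.adjoint T p, rfl, fun f => ?_⟩
    have := inner_adjoint_le_norm_mul_norm T p f
    nlinarith [norm_nonneg (T f), sq_nonneg ‖f‖]
  · rintro ⟨A, -, ω, rfl, hω⟩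
    obtain ⟨q, rfl⟩ := T.exists_adjoint_eq_of_abs_inner_le ω A
      (abs_inner_le_of_forall_inner_le_half_norm_sq_add T hω)
    exact ⟨q, rfl⟩

/-- In Hilbert spaces, the spectral source condition
`f† ∈ ran((T*T)^{n−1} T*)` is equivalent to the variational source condition
`VSC^{2n−1}(f†, A√·)`: existence of `ω ∈ X` with `f† = (T*T)^{n−1} ω` and
`⟪ω, f⟫ ≤ (1/2)‖f‖² + A‖T f‖` for all `f ∈ X`. -/
theorem stmt_16 {X Y : Type*}
    [NormedAddCommGroup X] [InnerProductSpace ℝ X] [CompleteSpace X]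
    [NormedAddCommGroup Y] [InnerProductSpace ℝ Y] [CompleteSpace Y]
    (T : X →L[ℝ] Y) (fdag : X) (n : ℕ) (hn : 1 ≤ n) :
    (∃ p : Y, fdag = ((ContinuousLinearMap.adjoint T ∘L T) ^ (n - 1))
      (ContinuousLinearMap.adjoint T p)) ↔
    (∃ A : ℝ, 0 < A ∧ ∃ ω : X,
      fdag = ((ContinuousLinearMap.adjoint T ∘L T) ^ (n - 1)) ω ∧
      ∀ f : X, ⟪ω, f⟫ ≤ 1 / 2 * ‖f‖ ^ 2 + A * ‖T f‖) :=
  stmt_16_general T fdag n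
end
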